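/- arXiv:1506.02984 — 5 statements merged into one kernel-verified Lean document; each statement's English description precedes it below -/
import Mathlib

section
/- Let p ≥ 1 be an integer, let 0 < c < 1 and M ≥ 0 be real numbers, and let s < T be integers. Suppose (e_t), indexed by the integers t with s−p+1 ≤ t ≤ T, is a family of nonnegative real numbers such that e_t ≤ M for every t, and such that e_t ≤ c · max_{1≤j≤p} e_{t−j} for every integer t with s < t ≤ T. Then for every integer t with s < t ≤ T one has e_t ≤ M · c^{(t−s−1)/p}, where the exponent (t−s−1)/p is a real power. -/
/-- Deterministic core of the coupling lemma for time-varying ARCH processes: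
a nonnegative family bounded by `M` satisfying the contraction recursion
`e t ≤ c * max_{1 ≤ j ≤ p} e (t - j)` decays geometrically at rate `c^{(t-s-1)/p}`. -/
theorem stmt_0 (p : ℕ) (hp : 1 ≤ p) (c M : ℝ) (hc0 : 0 < c) (hc1 : c < 1) (hM : 0 ≤ M)
    (s T : ℤ) (hsT : s < T) (e : ℤ → ℝ)
    (he0 : ∀ t : ℤ, s - p + 1 ≤ t → t ≤ T → 0 ≤ e t)
    (heM : ∀ t : ℤ, s - p + 1 ≤ t → t ≤ T → e t ≤ M)
    (hrec : ∀ t : ℤ, s < t → t ≤ T →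
      e t ≤ c * (Finset.Icc 1 p).sup' (Finset.nonempty_Icc.mpr hp)
        (fun j => e (t - (j : ℤ))))
    (t : ℤ) (ht1 : s < t) (ht2 : t ≤ T) :
    e t ≤ M * c ^ ((((t : ℝ) - (s : ℝ) - 1)) / (p : ℝ)) := by
  have hppos : 0 < p := hp
  have key : ∀ m : ℕ, ∀ t : ℤ, s < t → t ≤ T → t - s = (m : ℤ) →
      e t ≤ M * c ^ ((m + p - 1) / p) := by
    intro m
    induction m using Nat.strong_induction_on with
    | _ m ih =>
      intro t ht1 ht2 hm
      have hm1 : 1 ≤ m := by omega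
      set k := (m + p - 1) / p with hk
      have hkp : k * p ≤ m + p - 1 := Nat.div_mul_le_self _ _
      have hk1 : 1 ≤ k := by
        rw [hk, Nat.le_div_iff_mul_le hppos]
        omega
      have hbound : ∀ j ∈ Finset.Icc 1 p, e (t - (j : ℤ)) ≤ M * c ^ (k - 1) := by
        intro j hj
        simp only [Finset.mem_Icc] at hj
        by_cases hts : t - (j : ℤ) ≤ s
        · -- here m ≤ j ≤ p so k = 1
          have hmp : m ≤ p := by omega
          have hk2 : k < 2 := by
            rw [hk, Nat.div_lt_iff_lt_mul hppos]
            omega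
          have hkeq : k = 1 := by omega
          rw [hkeq]
          simpa using heM (t - (j : ℤ)) (by omega) (by omega)
        · push_neg at hts
          have hmj : (j : ℤ) < (m : ℤ) := by omega
          have hmj' : j < m := by exact_mod_cast hmj
          have h1 := ih (m - j) (by omega) (t - (j : ℤ)) hts (by omega) (by omega)
          refine h1.trans ?_
          have hexp : k - 1 ≤ (m - j + p - 1) / p := by
            rw [Nat.le_div_iff_mul_le hppos]
            have h2 : (k - 1) * p = k * p - p := by rw [Nat.sub_one_mul]
            omega
          exact mul_le_mul_of_nonneg_left
            (pow_le_pow_of_le_one hc0.le hc1.le hexp) hM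
      have hsup : (Finset.Icc 1 p).sup' (Finset.nonempty_Icc.mpr hp)
          (fun j => e (t - (j : ℤ))) ≤ M * c ^ (k - 1) :=
        Finset.sup'_le _ _ hbound
      have := (hrec t ht1 ht2).trans (mul_le_mul_of_nonneg_left hsup hc0.le)
      refine this.trans (le_of_eq ?_)
      have hpow : c ^ k = c * c ^ (k - 1) := by
        rw [← pow_succ']
        congr 1
        omega
      rw [hpow]
      ring
  set m := (t - s).toNat with hmdef
  have hmts : t - s = (m : ℤ) := by omega
  have hkey := key m t ht1 ht2 hmts
  set k := (m + p - 1) / p with hk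
  have hmk : m ≤ k * p := by
    have h : m + p - 1 < (k + 1) * p :=
      (Nat.div_lt_iff_lt_mul hppos).mp (by omega)
    have h' : (k + 1) * p = k * p + p := by ring
    rw [h'] at h
    omega
  refine hkey.trans (mul_le_mul_of_nonneg_left ?_ hM)
  rw [← Real.rpow_natCast c k]
  apply Real.rpow_le_rpow_of_exponent_ge hc0 hc1.le
  rw [div_le_iff₀ (by positivity : (0:ℝ) < (p:ℝ))]
  have h1 : ((t : ℝ) - s) = (m : ℝ) := by exact_mod_cast congrArg (fun z : ℤ => (z : ℝ)) hmts
  have h2 : (m : ℝ) ≤ (k : ℝ) * (p : ℝ) := by exact_mod_cast hmk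
  linarith
end

section
/- Let D ≥ 0 be a real number and q ≥ 1 an integer. There exists a constant C > 0, depending only on q and D, such that: for all real numbers s, φ with s ≥ φ > 0 and all nonnegative real numbers A₁, …, A_q satisfying A₁ ≤ D·(sφ)^{1/2} and, for every 2 ≤ k ≤ q, A_k ≤ Σ_{j=1}^{k−1} A_j·A_{k−j} + D·s·φ^{k−1}, one has A_q ≤ C·(sφ)^{q/2}. -/
/-- Recursive constants dominating the `A_k`. -/
noncomputable def cconst (D : ℝ) : ℕ → ℝ
  | k =>
    if h : k ≤ 1 then D + 1
    else (∑ j ∈ (Finset.Ico 1 k).attach, cconst D j.1 * cconst D (k - j.1)) + D + 1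
termination_by k => k
decreasing_by
  · exact (Finset.mem_Ico.mp j.2).2
  · have h1 := (Finset.mem_Ico.mp j.2).1
    omega

lemma cconst_pos (D : ℝ) (hD : 0 ≤ D) : ∀ k, 0 < cconst D k := by
  intro k
  induction k using Nat.strong_induction_on with
  | _ k ih =>
    rw [cconst]
    split
    · linarith
    · have : 0 ≤ ∑ j ∈ (Finset.Ico 1 k).attach, cconst D j.1 * cconst D (k - j.1) := by
        apply Finset.sum_nonneg
        intro j hj
        exact le_of_lt (mul_pos (ih j.1 (Finset.mem_Ico.mp j.2).2)
          (ih (k - j.1) (by have := (Finset.mem_Ico.mp j.2); omega)))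
      linarith

lemma cconst_one (D : ℝ) : cconst D 1 = D + 1 := by
  rw [cconst]; simp

lemma cconst_eq (D : ℝ) (k : ℕ) (hk : 2 ≤ k) :
    cconst D k = (∑ j ∈ Finset.Ico 1 k, cconst D j * cconst D (k - j)) + D + 1 := by
  rw [cconst]
  rw [dif_neg (by omega)]
  congr 2
  exact Finset.sum_attach (Finset.Ico 1 k) (fun j => cconst D j * cconst D (k - j))

/-- Deterministic induction from the proof of Lemma 2 of the supplement:
if `A₁ ≤ D√(sφ)` and `A_k ≤ Σ_{j=1}^{k−1} A_j A_{k−j} + D s φ^{k−1}` for `2 ≤ k ≤ q`,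
then `A_q ≤ C (sφ)^{q/2}` for a constant `C` depending only on `q` and `D`. -/
theorem stmt_10 (D : ℝ) (hD : 0 ≤ D) (q : ℕ) (hq : 1 ≤ q) :
    ∃ C : ℝ, 0 < C ∧
      ∀ (s φ : ℝ), 0 < φ → φ ≤ s → ∀ A : ℕ → ℝ,
        (∀ k, 1 ≤ k → k ≤ q → 0 ≤ A k) →
        A 1 ≤ D * (s * φ) ^ ((1 : ℝ) / 2) →
        (∀ k, 2 ≤ k → k ≤ q →
          A k ≤ (∑ j ∈ Finset.Ico 1 k, A j * A (k - j)) + D * s * φ ^ (k - 1)) →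
        A q ≤ C * (s * φ) ^ ((q : ℝ) / 2) := by
  refine ⟨cconst D q, cconst_pos D hD q, ?_⟩
  intro s φ hφ hφs A hA h1 hrec
  set x : ℝ := s * φ with hxdef
  have hx : 0 < x := mul_pos (lt_of_lt_of_le hφ hφs) hφ
  -- φ ≤ x^{1/2}
  have hsqrt : φ ≤ x ^ ((1 : ℝ) / 2) := by
    rw [← Real.sqrt_eq_rpow]
    have : φ ^ 2 ≤ x := by nlinarith
    exact (Real.le_sqrt hφ.le hx.le).mpr this
  have hrpow_nonneg : ∀ r : ℝ, 0 ≤ x ^ r := fun r => (Real.rpow_pos_of_pos hx r).le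
  have key : ∀ k, 1 ≤ k → k ≤ q → A k ≤ cconst D k * x ^ ((k : ℝ) / 2) := by
    intro k
    induction k using Nat.strong_induction_on with
    | _ k ih =>
      intro hk1 hkq
      rcases eq_or_lt_of_le hk1 with h1' | h2
      · subst h1'
        rw [cconst_one]
        calc A 1 ≤ D * x ^ ((1:ℝ)/2) := by simpa using h1
          _ ≤ (D + 1) * x ^ (((1:ℕ) : ℝ)/2) := by
              norm_num
              have := hrpow_nonneg ((1:ℝ)/2); nlinarith
        -- note cast: ((1:ℕ):ℝ)/2 = 1/2
      · have hk2 : 2 ≤ k := h2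
        have step := hrec k hk2 hkq
        -- bound the sum term
        have hsum : (∑ j ∈ Finset.Ico 1 k, A j * A (k - j)) ≤
            (∑ j ∈ Finset.Ico 1 k, cconst D j * cconst D (k - j)) * x ^ ((k : ℝ) / 2) := by
          rw [Finset.sum_mul]
          apply Finset.sum_le_sum
          intro j hj
          obtain ⟨hj1, hjk⟩ := Finset.mem_Ico.mp hj
          have hjq : j ≤ q := le_trans (le_of_lt hjk) hkq
          have hkj1 : 1 ≤ k - j := by omega
          have hkjq : k - j ≤ q := by omega
          have hAj := ih j hjk hj1 hjq
          have hAkj := ih (k - j) (by omega) hkj1 hkjq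
          have hmul : A j * A (k - j) ≤
              (cconst D j * x ^ ((j : ℝ)/2)) * (cconst D (k-j) * x ^ (((k-j : ℕ) : ℝ)/2)) :=
            mul_le_mul hAj hAkj (hA (k-j) hkj1 hkjq) (le_trans (hA j hj1 hjq) hAj)
          refine le_trans hmul (le_of_eq ?_)
          rw [mul_mul_mul_comm, ← Real.rpow_add hx]
          congr 1
          have : ((j : ℝ)/2 + ((k - j : ℕ) : ℝ)/2) = (k : ℝ)/2 := by
            have : ((k - j : ℕ) : ℝ) = (k : ℝ) - (j : ℝ) := by
              exact_mod_cast Nat.cast_sub (le_of_lt hjk)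
            rw [this]; ring
          rw [this]
        -- bound the remainder term
        have hrem : D * s * φ ^ (k - 1) ≤ D * x ^ ((k : ℝ)/2) := by
          have hφpow : φ ^ (k - 2) ≤ (x ^ ((1:ℝ)/2)) ^ (k - 2) :=
            pow_le_pow_left₀ hφ.le hsqrt _
          have h1 : s * φ ^ (k - 1) = x * φ ^ (k - 2) := by
            rw [hxdef]
            have : k - 1 = (k - 2) + 1 := by omega
            rw [this, pow_succ]; ring
          have h2 : x * φ ^ (k - 2) ≤ x * (x ^ ((1:ℝ)/2)) ^ (k - 2) := by
            apply mul_le_mul_of_nonneg_left hφpow hx.le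
          have h3 : x * (x ^ ((1:ℝ)/2)) ^ (k - 2) = x ^ ((k : ℝ)/2) := by
            rw [← Real.rpow_natCast (x ^ ((1:ℝ)/2)) (k - 2), ← Real.rpow_mul hx.le]
            nth_rewrite 1 [← Real.rpow_one x]
            rw [← Real.rpow_add hx]
            congr 1
            have hc : ((k - 2 : ℕ) : ℝ) = (k : ℝ) - 2 := by
              have := Nat.cast_sub (R := ℝ) hk2; simpa using this
            rw [hc]; ring
          calc D * s * φ ^ (k - 1) = D * (s * φ ^ (k - 1)) := by ring
            _ = D * (x * φ ^ (k - 2)) := by rw [h1]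
            _ ≤ D * (x ^ ((k : ℝ)/2)) := by
                refine mul_le_mul_of_nonneg_left ?_ hD
                rw [← h3]; exact h2
        calc A k ≤ (∑ j ∈ Finset.Ico 1 k, A j * A (k - j)) + D * s * φ ^ (k - 1) := step
          _ ≤ (∑ j ∈ Finset.Ico 1 k, cconst D j * cconst D (k - j)) * x ^ ((k : ℝ)/2)
              + D * x ^ ((k : ℝ)/2) := add_le_add hsum hrem
          _ ≤ cconst D k * x ^ ((k : ℝ)/2) := by
              rw [cconst_eq D k hk2]
              have := hrpow_nonneg ((k : ℝ)/2)
              nlinarith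
  exact key q hq le_rfl
end

section
/- For every integer q ≥ 1 and real numbers C > 0 and β ∈ (0,1), there exists a constant C′ > 0, depending only on q, C and β, with the following property. Let T ≥ 1 be an integer and let (Y^{(k)}_i), for 1 ≤ k ≤ q and 1 ≤ i ≤ T, be real random variables on a probability space such that each Y^{(k)}_i is centered (E Y^{(k)}_i = 0), every product Π_{l=u}^{v} Y^{(l)}_{t_l} (for 1 ≤ u ≤ v ≤ q and times t_u ≤ … ≤ t_v in {1,…,T}) is integrable, and for all 1 ≤ u ≤ j < v ≤ q and all times t_u ≤ … ≤ t_v in {1,…,T} the covariance bound |E[(Π_{l=u}^{j} Y^{(l)}_{t_l})·(Π_{l=j+1}^{v} Y^{(l)}_{t_l})] − E[Π_{l=u}^{j} Y^{(l)}_{t_l}]·E[Π_{l=j+1}^{v} Y^{(l)}_{t_l}]| ≤ C·β^{t_{j+1}−t_j} holds. Then for all nonnegative weights z₁, …, z_T and all real numbers s, φ with Σ_{i=1}^T z_i ≤ s, max_{1≤i≤T} z_i ≤ φ and φ ≤ s, one has Σ_{1≤i₁≤…≤i_q≤T} z_{i₁}⋯z_{i_q}·|E(Y^{(1)}_{i₁}⋯Y^{(q)}_{i_q})|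 ≤ C′·(φ·s)^{q/2}. -/
open MeasureTheory Finset

private lemma geom_tail_le {x : ℝ} (h0 : 0 ≤ x) (h1 : x < 1) (N : ℕ) :
    ∑ i ∈ Finset.range N, x ^ i ≤ (1 - x)⁻¹ := by
  have hx1 : x ≠ 1 := ne_of_lt h1
  have hpos : (0:ℝ) < 1 - x := by linarith
  have h2 : (x ^ N - 1) / (x - 1) = (1 - x ^ N) / (1 - x) := by
    rw [← neg_div_neg_eq]; ring_nf
  have hxN : 0 ≤ x ^ N := pow_nonneg h0 N
  rw [geom_sum_eq hx1, h2, inv_eq_one_div, div_le_div_iff₀ hpos hpos]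
  nlinarith

private lemma telescope_le (f : ℕ → ℕ) : ∀ n, f n - f 0 ≤ ∑ j ∈ Finset.range n, (f (j+1) - f j) := by
  intro n
  induction n with
  | zero => simp
  | succ n ih =>
    rw [Finset.sum_range_succ]
    have : f (n+1) - f 0 ≤ (f (n+1) - f n) + (f n - f 0) := by omega
    omega

private lemma prod_Icc_shift {M : Type*} [CommMonoid M] (f : ℕ → M) (a : ℕ) :
    ∀ k, ∏ l ∈ Finset.Icc (a+1) (a+k), f l = ∏ i ∈ Finset.range k, f (a+1+i) := by
  intro k
  induction k with
  | zero => simp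
  | succ k ih =>
    rw [Finset.prod_range_succ, ← ih, ← Nat.add_assoc,
      Finset.prod_Icc_succ_top (by omega : a + 1 ≤ a + k + 1)]
    congr 2
    omega

private lemma prod_fin_eq_prod_range {M : Type*} [CommMonoid M] (m : ℕ) (f : ℕ → M)
    (g : Fin m → M) (h : ∀ l : Fin m, g l = f ↑l) : ∏ l, g l = ∏ l ∈ Finset.range m, f l := by
  rw [← Fin.prod_univ_eq_prod_range]
  exact Finset.prod_congr rfl fun l _ => h l

private lemma fin_prod_split {M : Type*} [CommMonoid M] (m m₁ m₂ : ℕ) (hm : m₁ + m₂ = m) (f : ℕ → M) :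
    ∏ l ∈ Finset.range m, f l = (∏ l : Fin m₁, f ↑l) * (∏ l : Fin m₂, f (m₁ + ↑l)) := by
  subst hm
  rw [Finset.prod_range_add, Fin.prod_univ_eq_prod_range, Fin.prod_univ_eq_prod_range (fun i => f (m₁ + i))]

private def MonoSet (m T : ℕ) : Finset (Fin m → ℕ) :=
  (Fintype.piFinset fun _ : Fin m => Finset.Icc 1 T).filter
    (fun t => ∀ a b : Fin m, a ≤ b → t a ≤ t b)

private lemma mem_MonoSet {m T : ℕ} {t : Fin m → ℕ} :
    t ∈ MonoSet m T ↔ (∀ l : Fin m, 1 ≤ t l ∧ t l ≤ T) ∧ (∀ a b : Fin m, a ≤ b → t a ≤ t b) := by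
  simp [MonoSet, Fintype.mem_piFinset, Finset.mem_Icc]

/-- the split comparison: a sum over monotone tuples of a product of functions of the
two halves is at most the product of the two sums. -/
private lemma split_le (T m m₁ m₂ : ℕ) (hm : m₁ + m₂ = m)
    (g : (Fin m₁ → ℕ) → ℝ) (h : (Fin m₂ → ℕ) → ℝ)
    (hg : ∀ a ∈ MonoSet m₁ T, 0 ≤ g a) (hh : ∀ b ∈ MonoSet m₂ T, 0 ≤ h b) :
    ∑ t ∈ MonoSet m T,
        g (fun l : Fin m₁ => t ⟨l.1, by omega⟩) * h (fun l : Fin m₂ => t ⟨m₁ + l.1, by omega⟩)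
      ≤ (∑ a ∈ MonoSet m₁ T, g a) * (∑ b ∈ MonoSet m₂ T, h b) := by
  classical
  set Φ : (Fin m → ℕ) → (Fin m₁ → ℕ) × (Fin m₂ → ℕ) :=
    fun t => (fun l : Fin m₁ => t ⟨l.1, by omega⟩, fun l : Fin m₂ => t ⟨m₁ + l.1, by omega⟩) with hΦ
  have hinj : ∀ x ∈ MonoSet m T, ∀ y ∈ MonoSet m T, Φ x = Φ y → x = y := by
    intro x _ y _ hxy
    funext l
    rcases lt_or_ge l.1 m₁ with hl | hl
    · have := congrFun (congrArg Prod.fst hxy) ⟨l.1, hl⟩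
      simpa using this
    · have := congrFun (congrArg Prod.snd hxy) ⟨l.1 - m₁, by omega⟩
      have hll : m₁ + (l.1 - m₁) = l.1 := by omega
      simp only [hΦ] at this
      simpa [hll] using this
  have himg : (MonoSet m T).image Φ ⊆ (MonoSet m₁ T) ×ˢ (MonoSet m₂ T) := by
    intro p hp
    rw [Finset.mem_image] at hp
    obtain ⟨t, ht, rfl⟩ := hp
    rw [mem_MonoSet] at ht
    rw [Finset.mem_product]
    constructor
    · rw [mem_MonoSet]
      refine ⟨fun l => ht.1 _, fun a b hab => ht.2 _ _ ?_⟩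
      rw [Fin.mk_le_mk]
      exact hab
    · rw [mem_MonoSet]
      refine ⟨fun l => ht.1 _, fun a b hab => ht.2 _ _ ?_⟩
      rw [Fin.mk_le_mk]
      have : a.1 ≤ b.1 := hab
      omega
  show ∑ t ∈ MonoSet m T, g (Φ t).1 * h (Φ t).2 ≤ _
  calc ∑ t ∈ MonoSet m T, g (Φ t).1 * h (Φ t).2
      = ∑ p ∈ (MonoSet m T).image Φ, g p.1 * h p.2 :=
        (Finset.sum_image (f := fun p => g p.1 * h p.2) hinj).symm
    _ ≤ ∑ p ∈ (MonoSet m₁ T) ×ˢ (MonoSet m₂ T), g p.1 * h p.2 := by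
        apply Finset.sum_le_sum_of_subset_of_nonneg himg
        intro p hp _
        rw [Finset.mem_product] at hp
        exact mul_nonneg (hg _ hp.1) (hh _ hp.2)
    _ = (∑ a ∈ MonoSet m₁ T, g a) * (∑ b ∈ MonoSet m₂ T, h b) := by
        rw [Finset.sum_mul_sum, Finset.sum_product]

private lemma telescope_eq (f : ℕ → ℕ) (hf : ∀ j k, j ≤ k → f j ≤ f k) :
    ∀ n, ∑ j ∈ Finset.range n, (f (j+1) - f j) = f n - f 0 := by
  intro n
  induction n with
  | zero => simp
  | succ n ih =>
    rw [Finset.sum_range_succ, ih]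
    have h1 := hf 0 n (Nat.zero_le n)
    have h2 := hf n (n+1) (Nat.le_succ n)
    omega

private lemma rem_le (T n : ℕ) (hT : 1 ≤ T) (z : ℕ → ℝ) (γ s φ : ℝ)
    (hγ0 : 0 < γ) (hγ1 : γ < 1)
    (hz : ∀ i, 1 ≤ i → i ≤ T → 0 ≤ z i) (hs : (∑ i ∈ Finset.Icc 1 T, z i) ≤ s)
    (hφ : ∀ i, 1 ≤ i → i ≤ T → z i ≤ φ) :
    ∑ t ∈ MonoSet (n+2) T,
        (∏ l : Fin (n+2), z (t l)) * γ ^ (t ⟨n+1, by omega⟩ - t ⟨0, by omega⟩)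
      ≤ (φ * (1-γ)⁻¹) ^ (n+1) * s := by
  classical
  have hφ0 : 0 ≤ φ := le_trans (hz 1 le_rfl hT) (hφ 1 le_rfl hT)
  have hs0 : 0 ≤ s := le_trans (Finset.sum_nonneg fun i hi => by
    rw [Finset.mem_Icc] at hi; exact hz i hi.1 hi.2) hs
  set idx : ℕ → Fin (n+2) := fun j => ⟨min j (n+1), by omega⟩ with hidx
  -- pointwise bound
  have pointwise : ∀ t ∈ MonoSet (n+2) T,
      (∏ l : Fin (n+2), z (t l)) * γ ^ (t ⟨n+1, by omega⟩ - t ⟨0, by omega⟩)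
        ≤ φ ^ (n+1) * (z (t (idx 0)) * ∏ j ∈ Finset.range (n+1), γ ^ (t (idx (j+1)) - t (idx j))) := by
    intro t ht
    rw [mem_MonoSet] at ht
    have hmono : ∀ j k : ℕ, j ≤ k → t (idx j) ≤ t (idx k) := by
      intro j k hjk
      exact ht.2 _ _ (by rw [hidx, Fin.mk_le_mk]; omega)
    have hz' : ∀ l : Fin (n+2), 0 ≤ z (t l) := fun l => hz _ (ht.1 l).1 (ht.1 l).2
    have hprod : (∏ l : Fin (n+2), z (t l)) ≤ z (t (idx 0)) * φ ^ (n+1) := by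
      rw [Fin.prod_univ_succ]
      have h0 : (0 : Fin (n+2)) = idx 0 := by apply Fin.ext; simp [hidx]
      rw [← h0]
      apply mul_le_mul_of_nonneg_left _ (hz' 0)
      calc ∏ l : Fin (n+1), z (t l.succ) ≤ ∏ _l : Fin (n+1), φ :=
            Finset.prod_le_prod (fun l _ => hz' _) (fun l _ => hφ _ (ht.1 _).1 (ht.1 _).2)
        _ = φ ^ (n+1) := by rw [Finset.prod_const]; simp
    have hgeo : γ ^ (t ⟨n+1, by omega⟩ - t ⟨0, by omega⟩)
        = ∏ j ∈ Finset.range (n+1), γ ^ (t (idx (j+1)) - t (idx j)) := by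
      have e1 : t ⟨n+1, by omega⟩ = t (idx (n+1)) := congrArg t (Fin.ext (by simp [hidx]))
      have e0 : t ⟨0, by omega⟩ = t (idx 0) := congrArg t (Fin.ext (by simp [hidx]))
      rw [Finset.prod_pow_eq_pow_sum, telescope_eq (fun j => t (idx j)) hmono, e1, e0]
    rw [hgeo]
    have hgp : (0:ℝ) ≤ ∏ j ∈ Finset.range (n+1), γ ^ (t (idx (j+1)) - t (idx j)) :=
      Finset.prod_nonneg fun j _ => pow_nonneg hγ0.le _
    calc (∏ l : Fin (n+2), z (t l)) * ∏ j ∈ Finset.range (n+1), γ ^ (t (idx (j+1)) - t (idx j))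
        ≤ (z (t (idx 0)) * φ ^ (n+1)) * ∏ j ∈ Finset.range (n+1), γ ^ (t (idx (j+1)) - t (idx j)) :=
          mul_le_mul_of_nonneg_right hprod hgp
      _ = φ ^ (n+1) * (z (t (idx 0)) * ∏ j ∈ Finset.range (n+1), γ ^ (t (idx (j+1)) - t (idx j))) := by
          ring
  -- sum comparison via the injection (first value, gaps)
  set Ψ : (Fin (n+2) → ℕ) → ℕ × (Fin (n+1) → ℕ) :=
    fun t => (t (idx 0), fun j : Fin (n+1) => t (idx (j.1+1)) - t (idx j.1)) with hΨ
  set Tgt : Finset (ℕ × (Fin (n+1) → ℕ)) :=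
    (Finset.Icc 1 T) ×ˢ (Fintype.piFinset fun _ : Fin (n+1) => Finset.range T) with hTgt
  set F : ℕ × (Fin (n+1) → ℕ) → ℝ := fun p => z p.1 * ∏ j : Fin (n+1), γ ^ (p.2 j) with hF
  have key2 : ∑ t ∈ MonoSet (n+2) T, (z (t (idx 0)) * ∏ j ∈ Finset.range (n+1), γ ^ (t (idx (j+1)) - t (idx j)))
      ≤ s * ((1-γ)⁻¹) ^ (n+1) := by
    have hinj : ∀ x ∈ MonoSet (n+2) T, ∀ y ∈ MonoSet (n+2) T, Ψ x = Ψ y → x = y := by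
      intro x hx y hy hxy
      rw [mem_MonoSet] at hx hy
      have h1 := congrArg Prod.fst hxy
      have h2 := fun (j : Fin (n+1)) => congrFun (congrArg Prod.snd hxy) j
      simp only [hΨ] at h1 h2
      have hstep : ∀ k, k ≤ n+1 → x (idx k) = y (idx k) := by
        intro k
        induction k with
        | zero => intro _; exact h1
        | succ k ih =>
          intro hk
          have hih := ih (by omega)
          have hd := h2 ⟨k, by omega⟩
          have hx' : x (idx k) ≤ x (idx (k+1)) := hx.2 _ _ (by rw [hidx, Fin.mk_le_mk]; omega)
          have hy' : y (idx k) ≤ y (idx (k+1)) := hy.2 _ _ (by rw [hidx, Fin.mk_le_mk]; omega)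
          simp only at hd
          omega
      funext l
      have : l = idx l.1 := Fin.ext (by rw [hidx]; simp; omega)
      rw [this]
      exact hstep l.1 (by have := l.2; omega)
    have himg : (MonoSet (n+2) T).image Ψ ⊆ Tgt := by
      intro p hp
      rw [Finset.mem_image] at hp
      obtain ⟨t, ht, rfl⟩ := hp
      rw [mem_MonoSet] at ht
      rw [hTgt, Finset.mem_product]
      constructor
      · rw [Finset.mem_Icc]; exact ht.1 _
      · rw [Fintype.mem_piFinset]
        intro j
        rw [Finset.mem_range]
        have ha := ht.1 (idx (j.1+1))
        have hb := ht.1 (idx j.1)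
        simp only [hΨ]
        omega
    have hF0 : ∀ p ∈ Tgt, 0 ≤ F p := by
      intro p hp
      rw [hTgt, Finset.mem_product, Finset.mem_Icc] at hp
      exact mul_nonneg (hz _ hp.1.1 hp.1.2) (Finset.prod_nonneg fun j _ => pow_nonneg hγ0.le _)
    have heq : ∀ t ∈ MonoSet (n+2) T,
        z (t (idx 0)) * ∏ j ∈ Finset.range (n+1), γ ^ (t (idx (j+1)) - t (idx j)) = F (Ψ t) := by
      intro t _
      simp only [hF, hΨ]
      congr 1
      exact (Fin.prod_univ_eq_prod_range (fun j => γ ^ (t (idx (j+1)) - t (idx j))) (n+1)).symm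
    calc ∑ t ∈ MonoSet (n+2) T, (z (t (idx 0)) * ∏ j ∈ Finset.range (n+1), γ ^ (t (idx (j+1)) - t (idx j)))
        = ∑ t ∈ MonoSet (n+2) T, F (Ψ t) := Finset.sum_congr rfl heq
      _ = ∑ p ∈ (MonoSet (n+2) T).image Ψ, F p := (Finset.sum_image (f := F) hinj).symm
      _ ≤ ∑ p ∈ Tgt, F p := Finset.sum_le_sum_of_subset_of_nonneg himg (fun p hp _ => hF0 p hp)
      _ = (∑ x ∈ Finset.Icc 1 T, z x) * ∑ d ∈ Fintype.piFinset (fun _ : Fin (n+1) => Finset.range T),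
            ∏ j : Fin (n+1), γ ^ (d j) := by
          rw [hTgt, hF, Finset.sum_product, Finset.sum_mul_sum]
      _ ≤ s * ((1-γ)⁻¹) ^ (n+1) := by
          apply mul_le_mul hs _ _ hs0
          · rw [← Finset.prod_univ_sum]
            calc ∏ _j : Fin (n+1), ∑ i ∈ Finset.range T, γ ^ i
                ≤ ∏ _j : Fin (n+1), (1-γ)⁻¹ :=
                  Finset.prod_le_prod (fun j _ => Finset.sum_nonneg fun i _ => pow_nonneg hγ0.le _)
                    (fun j _ => geom_tail_le hγ0.le hγ1 T)
              _ = ((1-γ)⁻¹) ^ (n+1) := by rw [Finset.prod_const]; simp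
          · exact Finset.sum_nonneg fun d _ => Finset.prod_nonneg fun j _ => pow_nonneg hγ0.le _
  calc ∑ t ∈ MonoSet (n+2) T,
        (∏ l : Fin (n+2), z (t l)) * γ ^ (t ⟨n+1, by omega⟩ - t ⟨0, by omega⟩)
      ≤ ∑ t ∈ MonoSet (n+2) T,
        φ ^ (n+1) * (z (t (idx 0)) * ∏ j ∈ Finset.range (n+1), γ ^ (t (idx (j+1)) - t (idx j))) :=
        Finset.sum_le_sum pointwise
    _ = φ ^ (n+1) * ∑ t ∈ MonoSet (n+2) T,
        (z (t (idx 0)) * ∏ j ∈ Finset.range (n+1), γ ^ (t (idx (j+1)) - t (idx j))) := by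
        rw [Finset.mul_sum]
    _ ≤ φ ^ (n+1) * (s * ((1-γ)⁻¹) ^ (n+1)) :=
        mul_le_mul_of_nonneg_left key2 (pow_nonneg hφ0 _)
    _ = (φ * (1-γ)⁻¹) ^ (n+1) * s := by rw [mul_pow]; ring

private lemma pow_phi_s (n : ℕ) (φ s : ℝ) (hφ0 : 0 ≤ φ) (hφs : φ ≤ s) :
    φ ^ (n+1) * s ≤ (φ * s) ^ (((n+2:ℕ) : ℝ)/2) := by
  have hs0 : 0 ≤ s := le_trans hφ0 hφs
  have he : ((n+1:ℕ) : ℝ) = ((n+2:ℕ) : ℝ)/2 + (n : ℝ)/2 := by push_cast; ring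
  have h1 : φ ^ (n+1) = φ ^ (((n+2:ℕ) : ℝ)/2) * φ ^ ((n : ℝ)/2) := by
    rw [← Real.rpow_natCast φ (n+1), he, Real.rpow_add' hφ0 (by positivity)]
  have h2 : φ ^ ((n : ℝ)/2) ≤ s ^ ((n : ℝ)/2) :=
    Real.rpow_le_rpow hφ0 hφs (by positivity)
  have h3 : s ^ ((n : ℝ)/2) * s = s ^ (((n+2:ℕ) : ℝ)/2) := by
    nth_rewrite 2 [← Real.rpow_one s]
    rw [← Real.rpow_add' hs0 (by positivity)]
    congr 1
    push_cast; ring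
  calc φ ^ (n+1) * s = φ ^ (((n+2:ℕ) : ℝ)/2) * (φ ^ ((n : ℝ)/2) * s) := by rw [h1]; ring
    _ ≤ φ ^ (((n+2:ℕ) : ℝ)/2) * (s ^ ((n : ℝ)/2) * s) := by
        apply mul_le_mul_of_nonneg_left _ (Real.rpow_nonneg hφ0 _)
        exact mul_le_mul_of_nonneg_right h2 hs0
    _ = (φ * s) ^ (((n+2:ℕ) : ℝ)/2) := by rw [h3, ← Real.mul_rpow hφ0 hs0]


private def GoodBound (q : ℕ) (C β : ℝ) (m : ℕ) (K : ℝ) : Prop :=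
  ∀ (Ω : Type) [MeasureSpace Ω], IsProbabilityMeasure (volume : Measure Ω) →
  ∀ (T : ℕ), 1 ≤ T →
  ∀ (Y : ℕ → ℕ → Ω → ℝ),
  (∀ u v : ℕ, 1 ≤ u → u ≤ v → v ≤ q → ∀ t : ℕ → ℕ,
    (∀ l, u ≤ l → l ≤ v → 1 ≤ t l ∧ t l ≤ T) →
    (∀ l l', u ≤ l → l ≤ l' → l' ≤ v → t l ≤ t l') →
    Integrable (fun ω => ∏ l ∈ Finset.Icc u v, Y l (t l) ω)) →
  (∀ k i : ℕ, 1 ≤ k → k ≤ q → 1 ≤ i → i ≤ T → ∫ ω, Y k i ω = 0) →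
  (∀ u j v : ℕ, 1 ≤ u → u ≤ j → j < v → v ≤ q → ∀ t : ℕ → ℕ,
    (∀ l, u ≤ l → l ≤ v → 1 ≤ t l ∧ t l ≤ T) →
    (∀ l l', u ≤ l → l ≤ l' → l' ≤ v → t l ≤ t l') →
    |(∫ ω, (∏ l ∈ Finset.Icc u j, Y l (t l) ω) *
          (∏ l ∈ Finset.Icc (j + 1) v, Y l (t l) ω)) -
        (∫ ω, ∏ l ∈ Finset.Icc u j, Y l (t l) ω) *
          (∫ ω, ∏ l ∈ Finset.Icc (j + 1) v, Y l (t l) ω)|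
      ≤ C * β ^ (t (j + 1) - t j)) →
  ∀ (z : ℕ → ℝ) (s φ : ℝ),
    (∀ i, 1 ≤ i → i ≤ T → 0 ≤ z i) →
    (∑ i ∈ Finset.Icc 1 T, z i) ≤ s →
    (∀ i, 1 ≤ i → i ≤ T → z i ≤ φ) →
    φ ≤ s →
    ∀ off : ℕ, off + m ≤ q →
    (∑ t ∈ MonoSet m T,
      (∏ l : Fin m, z (t l)) * |∫ ω, ∏ l : Fin m, Y (off + (l : ℕ) + 1) (t l) ω|)
      ≤ K * (φ * s) ^ ((m : ℝ) / 2)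

private lemma key (q : ℕ) (hq : 1 ≤ q) (C β : ℝ) (hC : 0 < C)
    (hβ0 : 0 < β) (hβ1 : β < 1) :
    ∀ m : ℕ, 1 ≤ m → ∃ K : ℝ, 0 < K ∧ GoodBound q C β m K := by
  -- the geometric rate γ with γ ^ (max (q-1) 1) = β
  set D : ℕ := max (q-1) 1 with hD
  have hD1 : 1 ≤ D := le_max_right _ _
  set γ : ℝ := β ^ ((D : ℝ)⁻¹) with hγ
  have hγ0 : 0 < γ := Real.rpow_pos_of_pos hβ0 _
  have hγ1 : γ < 1 := Real.rpow_lt_one hβ0.le hβ1 (by positivity)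
  have hγD : γ ^ D = β := by
    rw [hγ, ← Real.rpow_natCast (β ^ ((D:ℝ)⁻¹)) D, ← Real.rpow_mul hβ0.le,
      inv_mul_cancel₀ (by positivity : (D:ℝ) ≠ 0), Real.rpow_one]
  intro m
  induction m using Nat.strong_induction_on with
  | _ m IH =>
  intro hm
  rcases m with _ | _ | n
  · omega
  · refine ⟨1, one_pos, ?_⟩
    intro Ω _ hP T hT Y hInt hCent hCov z s φ hz hs hφ hφs off hoff
    have hφ0 : 0 ≤ φ := le_trans (hz 1 le_rfl hT) (hφ 1 le_rfl hT)
    have hs0 : 0 ≤ s := le_trans (Finset.sum_nonneg fun i hi => by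
      rw [Finset.mem_Icc] at hi; exact hz i hi.1 hi.2) hs
    have hzero : ∀ t ∈ MonoSet 1 T,
        (∏ l : Fin 1, z (t l)) * |∫ ω, ∏ l : Fin 1, Y (off + (l : ℕ) + 1) (t l) ω| = 0 := by
      intro t ht
      rw [mem_MonoSet] at ht
      have : (∫ ω, ∏ l : Fin 1, Y (off + (l : ℕ) + 1) (t l) ω) = 0 := by
        have : (fun ω => ∏ l : Fin 1, Y (off + (l : ℕ) + 1) (t l) ω)
            = fun ω => Y (off + 1) (t 0) ω := by
          funext ω
          rw [Fin.prod_univ_one]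
          norm_num
        rw [this]
        exact hCent (off+1) (t 0) (by omega) (by omega) (ht.1 0).1 (ht.1 0).2
      rw [this]
      simp
    rw [Finset.sum_eq_zero hzero]
    positivity
  · -- main case m = n + 2
    have H : ∀ k : ℕ, ∃ K : ℝ, 0 < K ∧ (k < n+2 → 1 ≤ k → GoodBound q C β k K) := by
      intro k
      by_cases h : k < n + 2 ∧ 1 ≤ k
      · obtain ⟨K, hK0, hKP⟩ := IH k h.1 h.2
        exact ⟨K, hK0, fun _ _ => hKP⟩
      · exact ⟨1, one_pos, fun h1 h2 => absurd ⟨h1, h2⟩ h⟩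
    choose Kf hKf0 hKf using H
    have hγ1' : (0:ℝ) < 1 - γ := by linarith
    set K : ℝ := (∑ j ∈ Finset.range (n+1), Kf (j+1) * Kf (n+1-j)) + C * ((1-γ)⁻¹) ^ (n+1)
      with hKdef
    have hK0 : 0 < K := by
      rw [hKdef]
      have h1 : 0 ≤ ∑ j ∈ Finset.range (n+1), Kf (j+1) * Kf (n+1-j) :=
        Finset.sum_nonneg fun j _ => le_of_lt (mul_pos (hKf0 _) (hKf0 _))
      have h2 : 0 < C * ((1-γ)⁻¹) ^ (n+1) := by positivity
      linarith
    refine ⟨K, hK0, ?_⟩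
    intro Ω _ hP T hT Y hInt hCent hCov z s φ hz hs hφ hφs off hoff
    have hφ0 : 0 ≤ φ := le_trans (hz 1 le_rfl hT) (hφ 1 le_rfl hT)
    have hs0 : 0 ≤ s := le_trans (Finset.sum_nonneg fun i hi => by
      rw [Finset.mem_Icc] at hi; exact hz i hi.1 hi.2) hs
    have hφs0 : 0 ≤ φ * s := mul_nonneg hφ0 hs0
    set idx : ℕ → Fin (n+2) := fun j => ⟨min j (n+1), by omega⟩ with hidx
    -- the two half-integrals, as functions of the split point j
    set A : ℕ → (Fin (n+2) → ℕ) → ℝ := fun j t =>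
      |∫ ω, ∏ l ∈ Finset.range (j+1), Y (off + l + 1) (t (idx l)) ω| with hA
    set B : ℕ → (Fin (n+2) → ℕ) → ℝ := fun j t =>
      |∫ ω, ∏ l ∈ Finset.range (n+1-j), Y (off + (j+1+l) + 1) (t (idx (j+1+l))) ω| with hB
    -- pointwise estimate
    have hpt : ∀ t ∈ MonoSet (n+2) T,
        |∫ ω, ∏ l : Fin (n+2), Y (off + (l : ℕ) + 1) (t l) ω|
          ≤ (∑ j ∈ Finset.range (n+1), A j t * B j t)
            + C * γ ^ (t (idx (n+1)) - t (idx 0)) := by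
      intro t ht
      rw [mem_MonoSet] at ht
      have hmono : ∀ j k : ℕ, j ≤ k → t (idx j) ≤ t (idx k) := by
        intro j k hjk
        exact ht.2 _ _ (by rw [hidx, Fin.mk_le_mk]; omega)
      have hfull : (∫ ω, ∏ l : Fin (n+2), Y (off + (l:ℕ) + 1) (t l) ω)
          = ∫ ω, ∏ l ∈ Finset.range (n+2), Y (off + l + 1) (t (idx l)) ω := by
        apply integral_congr_ae; filter_upwards with ω
        exact prod_fin_eq_prod_range (n+2) (fun l => Y (off + l + 1) (t (idx l)) ω)
          (fun l => Y (off + (l:ℕ) + 1) (t l) ω)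
          (fun l => congrArg (fun x => Y (off + (l:ℕ) + 1) x ω)
            (congrArg t (Fin.ext (by simp [hidx]; omega))))
      obtain ⟨j, hjmem, hjmax⟩ := Finset.exists_max_image (Finset.range (n+1))
        (fun j => t (idx (j+1)) - t (idx j)) ⟨0, Finset.mem_range.mpr (by omega)⟩
      rw [Finset.mem_range] at hjmem
      set t' : ℕ → ℕ := fun l => t (idx (l - (off+1))) with ht'
      have hcond1 : ∀ l, off+1 ≤ l → l ≤ off+(n+2) → 1 ≤ t' l ∧ t' l ≤ T :=
        fun l _ _ => ht.1 _
      have hcond2 : ∀ l l', off+1 ≤ l → l ≤ l' → l' ≤ off+(n+2) → t' l ≤ t' l' := by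
        intro l l' h1 h2 h3
        exact hmono _ _ (by omega)
      have hcov := hCov (off+1) (off+1+j) (off+(n+2)) (by omega) (by omega) (by omega)
        (by omega) t' hcond1 hcond2
      have hP1 : ∀ ω, (∏ l ∈ Finset.Icc (off+1) (off+1+j), Y l (t' l) ω)
          = ∏ l ∈ Finset.range (j+1), Y (off + l + 1) (t (idx l)) ω := by
        intro ω
        rw [show off+1+j = off+(j+1) by omega, prod_Icc_shift (fun l => Y l (t' l) ω) off (j+1)]
        apply Finset.prod_congr rfl
        intro i hi
        show Y (off+1+i) (t' (off+1+i)) ω = _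
        rw [ht']
        show Y (off+1+i) (t (idx (off+1+i - (off+1)))) ω = _
        rw [show off+1+i - (off+1) = i by omega, show off+1+i = off+i+1 by omega]
      have hP2 : ∀ ω, (∏ l ∈ Finset.Icc (off+1+j+1) (off+(n+2)), Y l (t' l) ω)
          = ∏ l ∈ Finset.range (n+1-j), Y (off + (j+1+l) + 1) (t (idx (j+1+l))) ω := by
        intro ω
        rw [show off+(n+2) = off+1+j+(n+1-j) by omega,
          prod_Icc_shift (fun l => Y l (t' l) ω) (off+1+j) (n+1-j)]
        apply Finset.prod_congr rfl
        intro i hi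
        show Y (off+1+j+1+i) (t' (off+1+j+1+i)) ω = _
        rw [ht']
        show Y (off+1+j+1+i) (t (idx (off+1+j+1+i - (off+1)))) ω = _
        rw [show off+1+j+1+i - (off+1) = j+1+i by omega,
          show off+1+j+1+i = off+(j+1+i)+1 by omega]
      have hA' : |∫ ω, ∏ l ∈ Finset.Icc (off+1) (off+1+j), Y l (t' l) ω| = A j t := by
        rw [hA]
        show _ = |∫ ω, ∏ l ∈ Finset.range (j+1), Y (off + l + 1) (t (idx l)) ω|
        congr 1
        apply integral_congr_ae; filter_upwards with ω; exact hP1 ω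
      have hB' : |∫ ω, ∏ l ∈ Finset.Icc (off+1+j+1) (off+(n+2)), Y l (t' l) ω| = B j t := by
        rw [hB]
        show _ = |∫ ω, ∏ l ∈ Finset.range (n+1-j), Y (off + (j+1+l) + 1) (t (idx (j+1+l))) ω|
        congr 1
        apply integral_congr_ae; filter_upwards with ω; exact hP2 ω
      have hgap : t' (off+1+j+1) - t' (off+1+j) = t (idx (j+1)) - t (idx j) := by
        rw [ht']
        show t (idx (off+1+j+1 - (off+1))) - t (idx (off+1+j-(off+1))) = _
        rw [show off+1+j+1-(off+1) = j+1 by omega, show off+1+j-(off+1) = j by omega]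
      have habs : ∀ x y : ℝ, |x| ≤ |x - y| + |y| := by
        intro x y
        calc |x| = |x - y + y| := by congr 1; ring
          _ ≤ |x - y| + |y| := abs_add_le _ _
      have hABj : |∫ ω, ∏ l ∈ Finset.range (n+2), Y (off + l + 1) (t (idx l)) ω|
          ≤ A j t * B j t + C * β ^ (t (idx (j+1)) - t (idx j)) := by
        have hsplitprod : ∀ ω, (∏ l ∈ Finset.range (n+2), Y (off + l + 1) (t (idx l)) ω)
            = (∏ l ∈ Finset.Icc (off+1) (off+1+j), Y l (t' l) ω)
              * (∏ l ∈ Finset.Icc (off+1+j+1) (off+(n+2)), Y l (t' l) ω) := by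
          intro ω
          rw [hP1 ω, hP2 ω]
          have hr : Finset.range (n+2) = Finset.range ((j+1)+(n+1-j)) := by
            rw [show (j+1)+(n+1-j) = n+2 by omega]
          rw [hr, Finset.prod_range_add]
        have h1 : (∫ ω, ∏ l ∈ Finset.range (n+2), Y (off+l+1) (t (idx l)) ω)
            = ∫ ω, (∏ l ∈ Finset.Icc (off+1) (off+1+j), Y l (t' l) ω)
                * (∏ l ∈ Finset.Icc (off+1+j+1) (off+(n+2)), Y l (t' l) ω) := by
          apply integral_congr_ae; filter_upwards with ω; exact hsplitprod ω
        rw [h1]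
        calc |∫ ω, (∏ l ∈ Finset.Icc (off+1) (off+1+j), Y l (t' l) ω)
                * (∏ l ∈ Finset.Icc (off+1+j+1) (off+(n+2)), Y l (t' l) ω)|
            ≤ |(∫ ω, (∏ l ∈ Finset.Icc (off+1) (off+1+j), Y l (t' l) ω)
                * (∏ l ∈ Finset.Icc (off+1+j+1) (off+(n+2)), Y l (t' l) ω))
                - (∫ ω, ∏ l ∈ Finset.Icc (off+1) (off+1+j), Y l (t' l) ω)
                  * (∫ ω, ∏ l ∈ Finset.Icc (off+1+j+1) (off+(n+2)), Y l (t' l) ω)|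
              + |(∫ ω, ∏ l ∈ Finset.Icc (off+1) (off+1+j), Y l (t' l) ω)
                  * (∫ ω, ∏ l ∈ Finset.Icc (off+1+j+1) (off+(n+2)), Y l (t' l) ω)| := habs _ _
          _ ≤ C * β ^ (t' (off+1+j+1) - t' (off+1+j)) + A j t * B j t := by
              apply add_le_add hcov
              rw [abs_mul, hA', hB']
          _ = A j t * B j t + C * β ^ (t (idx (j+1)) - t (idx j)) := by rw [hgap, add_comm]
      have hβγ : β ^ (t (idx (j+1)) - t (idx j)) ≤ γ ^ (t (idx (n+1)) - t (idx 0)) := by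
        have htel := telescope_le (fun i => t (idx i)) (n+1)
        have hsum : ∑ i ∈ Finset.range (n+1), (t (idx (i+1)) - t (idx i))
            ≤ (n+1) * (t (idx (j+1)) - t (idx j)) := by
          calc ∑ i ∈ Finset.range (n+1), (t (idx (i+1)) - t (idx i))
              ≤ ∑ _i ∈ Finset.range (n+1), (t (idx (j+1)) - t (idx j)) :=
                Finset.sum_le_sum fun i hi => hjmax i hi
            _ = (n+1) * (t (idx (j+1)) - t (idx j)) := by
                rw [Finset.sum_const, Finset.card_range, smul_eq_mul]
        have hD2 : n+1 ≤ D := by rw [hD]; omega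
        have hle : t (idx (n+1)) - t (idx 0) ≤ D * (t (idx (j+1)) - t (idx j)) :=
          le_trans (le_trans htel hsum) (Nat.mul_le_mul_right _ hD2)
        rw [← hγD, ← pow_mul]
        exact pow_le_pow_of_le_one hγ0.le hγ1.le hle
      have hAB0 : ∀ i, 0 ≤ A i t * B i t := fun i => by
        rw [hA, hB]; exact mul_nonneg (abs_nonneg _) (abs_nonneg _)
      have hsingle : A j t * B j t ≤ ∑ i ∈ Finset.range (n+1), A i t * B i t :=
        Finset.single_le_sum (fun i _ => hAB0 i) (Finset.mem_range.mpr hjmem)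
      calc |∫ ω, ∏ l : Fin (n+2), Y (off + (l:ℕ) + 1) (t l) ω|
          = |∫ ω, ∏ l ∈ Finset.range (n+2), Y (off + l + 1) (t (idx l)) ω| := by rw [hfull]
        _ ≤ A j t * B j t + C * β ^ (t (idx (j+1)) - t (idx j)) := hABj
        _ ≤ (∑ i ∈ Finset.range (n+1), A i t * B i t)
            + C * γ ^ (t (idx (n+1)) - t (idx 0)) :=
            add_le_add hsingle (mul_le_mul_of_nonneg_left hβγ hC.le)

    have hsplit : ∀ j ∈ Finset.range (n+1),
        (∑ t ∈ MonoSet (n+2) T, (∏ l : Fin (n+2), z (t l)) * (A j t * B j t))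
          ≤ Kf (j+1) * Kf (n+1-j) * (φ * s) ^ (((n+2:ℕ) : ℝ)/2) := by
      intro j hjmem
      rw [Finset.mem_range] at hjmem
      have hm12 : (j+1) + (n+1-j) = n+2 := by omega
      set g : (Fin (j+1) → ℕ) → ℝ := fun aa =>
        (∏ l : Fin (j+1), z (aa l)) *
          |∫ ω, ∏ l : Fin (j+1), Y (off + (l:ℕ) + 1) (aa l) ω| with hg
      set h : (Fin (n+1-j) → ℕ) → ℝ := fun bb =>
        (∏ l : Fin (n+1-j), z (bb l)) *
          |∫ ω, ∏ l : Fin (n+1-j), Y (off + (j+1) + (l:ℕ) + 1) (bb l) ω| with hh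
      have hg0 : ∀ aa ∈ MonoSet (j+1) T, 0 ≤ g aa := by
        intro aa haa; rw [mem_MonoSet] at haa
        exact mul_nonneg
          (Finset.prod_nonneg fun l _ => hz _ (haa.1 l).1 (haa.1 l).2) (abs_nonneg _)
      have hh0 : ∀ bb ∈ MonoSet (n+1-j) T, 0 ≤ h bb := by
        intro bb hbb; rw [mem_MonoSet] at hbb
        exact mul_nonneg
          (Finset.prod_nonneg fun l _ => hz _ (hbb.1 l).1 (hbb.1 l).2) (abs_nonneg _)
      have hfact : ∀ t ∈ MonoSet (n+2) T,
          (∏ l : Fin (n+2), z (t l)) * (A j t * B j t)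
            = g (fun l : Fin (j+1) => t ⟨l.1, by omega⟩)
              * h (fun l : Fin (n+1-j) => t ⟨(j+1) + l.1, by omega⟩) := by
        intro t ht
        have hzsplit : (∏ l : Fin (n+2), z (t l))
            = (∏ l : Fin (j+1), z (t ⟨l.1, by omega⟩))
              * (∏ l : Fin (n+1-j), z (t ⟨(j+1) + l.1, by omega⟩)) := by
          rw [prod_fin_eq_prod_range (n+2) (fun l => z (t (idx l)))
              (fun l => z (t l))
              (fun l => congrArg z (congrArg t (Fin.ext (by simp [hidx]; omega)))),
            fin_prod_split (n+2) (j+1) (n+1-j) hm12 (fun l => z (t (idx l)))]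
          congr 1
          · exact Finset.prod_congr rfl fun l _ =>
              congrArg z (congrArg t (Fin.ext (by simp [hidx]; omega)))
          · exact Finset.prod_congr rfl fun l _ =>
              congrArg z (congrArg t (Fin.ext (by simp [hidx]; omega)))
        have hAone : A j t =
            |∫ ω, ∏ l : Fin (j+1), Y (off + (l:ℕ) + 1) (t ⟨l.1, by omega⟩) ω| := by
          rw [hA]
          show |∫ ω, ∏ l ∈ Finset.range (j+1), Y (off + l + 1) (t (idx l)) ω| = _
          congr 1
          apply integral_congr_ae
          filter_upwards with ω
          exact (prod_fin_eq_prod_range (j+1) (fun l => Y (off + l + 1) (t (idx l)) ω)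
            (fun l => Y (off + (l:ℕ) + 1) (t ⟨l.1, by omega⟩) ω)
            (fun l => congrArg (fun x => Y (off + (l:ℕ) + 1) x ω)
              (congrArg t (Fin.ext (by simp [hidx]; omega))))).symm
        have hBone : B j t =
            |∫ ω, ∏ l : Fin (n+1-j), Y (off + (j+1) + (l:ℕ) + 1) (t ⟨(j+1) + l.1, by omega⟩) ω| := by
          rw [hB]
          show |∫ ω, ∏ l ∈ Finset.range (n+1-j), Y (off + (j+1+l) + 1) (t (idx (j+1+l))) ω| = _
          congr 1
          apply integral_congr_ae
          filter_upwards with ω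
          refine (prod_fin_eq_prod_range (n+1-j) (fun l => Y (off + (j+1+l) + 1) (t (idx (j+1+l))) ω)
            (fun l => Y (off + (j+1) + (l:ℕ) + 1) (t ⟨(j+1) + l.1, by omega⟩) ω)
            (fun l => ?_)).symm
          show Y (off + (j+1) + (l:ℕ) + 1) (t ⟨(j+1) + l.1, by omega⟩) ω
            = Y (off + (j+1+(l:ℕ)) + 1) (t (idx (j+1+(l:ℕ)))) ω
          rw [show off + (j+1) + (l:ℕ) + 1 = off + (j+1+(l:ℕ)) + 1 by omega]
          exact congrArg (fun x => Y (off + (j+1+(l:ℕ)) + 1) x ω)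
            (congrArg t (Fin.ext (by simp [hidx]; omega)))
        rw [hzsplit, hAone, hBone, hg, hh]
        ring
      have hb1 := hKf (j+1) (by omega) (by omega) Ω hP T hT Y hInt hCent hCov
        z s φ hz hs hφ hφs off (by omega)
      have hb2 := hKf (n+1-j) (by omega) (by omega) Ω hP T hT Y hInt hCent hCov
        z s φ hz hs hφ hφs (off + (j+1)) (by omega)
      have hsum1 : (∑ aa ∈ MonoSet (j+1) T, g aa) ≤ Kf (j+1) * (φ*s) ^ (((j+1:ℕ):ℝ)/2) := by
        rw [hg]; exact hb1
      have hsum2 : (∑ bb ∈ MonoSet (n+1-j) T, h bb)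
          ≤ Kf (n+1-j) * (φ*s) ^ (((n+1-j:ℕ):ℝ)/2) := by
        rw [hh]; exact hb2
      calc ∑ t ∈ MonoSet (n+2) T, (∏ l : Fin (n+2), z (t l)) * (A j t * B j t)
          = ∑ t ∈ MonoSet (n+2) T,
              g (fun l : Fin (j+1) => t ⟨l.1, by omega⟩)
                * h (fun l : Fin (n+1-j) => t ⟨(j+1) + l.1, by omega⟩) :=
            Finset.sum_congr rfl hfact
        _ ≤ (∑ aa ∈ MonoSet (j+1) T, g aa) * (∑ bb ∈ MonoSet (n+1-j) T, h bb) :=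
            split_le T (n+2) (j+1) (n+1-j) hm12 g h hg0 hh0
        _ ≤ (Kf (j+1) * (φ*s) ^ (((j+1:ℕ):ℝ)/2)) * (Kf (n+1-j) * (φ*s) ^ (((n+1-j:ℕ):ℝ)/2)) := by
            exact mul_le_mul hsum1 hsum2 (Finset.sum_nonneg hh0)
              (mul_nonneg (hKf0 _).le (Real.rpow_nonneg hφs0 _))
        _ = Kf (j+1) * Kf (n+1-j) * (φ * s) ^ (((n+2:ℕ) : ℝ)/2) := by
            rw [mul_mul_mul_comm, ← Real.rpow_add' hφs0 (by positivity)]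
            congr 2
            rw [Nat.cast_sub (by omega : j ≤ n+1)]
            push_cast
            ring

    -- remainder term
    have hrem : (∑ t ∈ MonoSet (n+2) T,
          (∏ l : Fin (n+2), z (t l)) * γ ^ (t (idx (n+1)) - t (idx 0)))
        ≤ (φ * (1-γ)⁻¹) ^ (n+1) * s := by
      have := rem_le T n hT z γ s φ hγ0 hγ1 hz hs hφ
      refine le_trans (le_of_eq (Finset.sum_congr rfl fun t _ => ?_)) this
      rw [show idx (n+1) = ⟨n+1, by omega⟩ from Fin.ext (by simp [hidx]),
        show idx 0 = ⟨0, by omega⟩ from Fin.ext (by simp [hidx])]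
    have hZ0 : ∀ t ∈ MonoSet (n+2) T, 0 ≤ ∏ l : Fin (n+2), z (t l) := by
      intro t ht
      rw [mem_MonoSet] at ht
      exact Finset.prod_nonneg fun l _ => hz _ (ht.1 l).1 (ht.1 l).2
    calc ∑ t ∈ MonoSet (n+2) T,
          (∏ l : Fin (n+2), z (t l)) * |∫ ω, ∏ l : Fin (n+2), Y (off + (l : ℕ) + 1) (t l) ω|
        ≤ ∑ t ∈ MonoSet (n+2) T, ((∑ j ∈ Finset.range (n+1),
              (∏ l : Fin (n+2), z (t l)) * (A j t * B j t))
            + (∏ l : Fin (n+2), z (t l)) * (C * γ ^ (t (idx (n+1)) - t (idx 0)))) := by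
          apply Finset.sum_le_sum
          intro t ht
          rw [← Finset.mul_sum, ← mul_add]
          exact mul_le_mul_of_nonneg_left (hpt t ht) (hZ0 t ht)
      _ = (∑ j ∈ Finset.range (n+1), ∑ t ∈ MonoSet (n+2) T,
              (∏ l : Fin (n+2), z (t l)) * (A j t * B j t))
          + C * ∑ t ∈ MonoSet (n+2) T,
              (∏ l : Fin (n+2), z (t l)) * γ ^ (t (idx (n+1)) - t (idx 0)) := by
          rw [Finset.sum_add_distrib, Finset.sum_comm, Finset.mul_sum]
          congr 1
          exact Finset.sum_congr rfl fun t _ => by ring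
      _ ≤ (∑ j ∈ Finset.range (n+1), Kf (j+1) * Kf (n+1-j) * (φ * s) ^ (((n+2:ℕ) : ℝ)/2))
          + C * ((φ * (1-γ)⁻¹) ^ (n+1) * s) := by
          apply add_le_add (Finset.sum_le_sum hsplit)
          exact mul_le_mul_of_nonneg_left hrem hC.le
      _ ≤ K * (φ * s) ^ (((n+2:ℕ) : ℝ)/2) := by
          rw [← Finset.sum_mul, hKdef, add_mul]
          apply add_le_add_right
          have h1 : (φ * (1-γ)⁻¹) ^ (n+1) * s = ((1-γ)⁻¹) ^ (n+1) * (φ ^ (n+1) * s) := by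
            rw [mul_pow]; ring
          rw [h1, ← mul_assoc]
          exact mul_le_mul_of_nonneg_left (pow_phi_s n φ s hφ0 hφs) (by positivity)


/-- Abstract form of Lemma 2 ('inter') of the supplement: centered random variables
whose ordered product covariances decay geometrically in the time gap satisfy
`Σ_{i₁≤…≤i_q} z_{i₁}⋯z_{i_q} |E(Y^{(1)}_{i₁}⋯Y^{(q)}_{i_q})| ≤ C′ (φ s)^{q/2}`. -/
theorem stmt_11 (q : ℕ) (hq : 1 ≤ q) (C β : ℝ) (hC : 0 < C)
    (hβ0 : 0 < β) (hβ1 : β < 1) :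
    ∃ C' : ℝ, 0 < C' ∧
      ∀ (Ω : Type) [MeasureSpace Ω], IsProbabilityMeasure (volume : Measure Ω) →
      ∀ (T : ℕ), 1 ≤ T →
      ∀ (Y : ℕ → ℕ → Ω → ℝ),
      -- integrability of all ordered products
      (∀ u v : ℕ, 1 ≤ u → u ≤ v → v ≤ q → ∀ t : ℕ → ℕ,
        (∀ l, u ≤ l → l ≤ v → 1 ≤ t l ∧ t l ≤ T) →
        (∀ l l', u ≤ l → l ≤ l' → l' ≤ v → t l ≤ t l') →
        Integrable (fun ω => ∏ l ∈ Finset.Icc u v, Y l (t l) ω)) →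
      -- centering
      (∀ k i : ℕ, 1 ≤ k → k ≤ q → 1 ≤ i → i ≤ T → ∫ ω, Y k i ω = 0) →
      -- geometric covariance bound for ordered split products
      (∀ u j v : ℕ, 1 ≤ u → u ≤ j → j < v → v ≤ q → ∀ t : ℕ → ℕ,
        (∀ l, u ≤ l → l ≤ v → 1 ≤ t l ∧ t l ≤ T) →
        (∀ l l', u ≤ l → l ≤ l' → l' ≤ v → t l ≤ t l') →
        |(∫ ω, (∏ l ∈ Finset.Icc u j, Y l (t l) ω) *
              (∏ l ∈ Finset.Icc (j + 1) v, Y l (t l) ω)) -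
            (∫ ω, ∏ l ∈ Finset.Icc u j, Y l (t l) ω) *
              (∫ ω, ∏ l ∈ Finset.Icc (j + 1) v, Y l (t l) ω)|
          ≤ C * β ^ (t (j + 1) - t j)) →
      ∀ (z : ℕ → ℝ) (s φ : ℝ),
        (∀ i, 1 ≤ i → i ≤ T → 0 ≤ z i) →
        (∑ i ∈ Finset.Icc 1 T, z i) ≤ s →
        (∀ i, 1 ≤ i → i ≤ T → z i ≤ φ) →
        φ ≤ s →
        (∑ t ∈ (Fintype.piFinset fun _ : Fin q => Finset.Icc 1 T) |>.filter
            (fun t => ∀ a b : Fin q, a ≤ b → t a ≤ t b),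
          (∏ l : Fin q, z (t l)) * |∫ ω, ∏ l : Fin q, Y ((l : ℕ) + 1) (t l) ω|)
          ≤ C' * (φ * s) ^ ((q : ℝ) / 2) := by
  obtain ⟨K, hK0, hKP⟩ := key q hq C β hC hβ0 hβ1 q hq
  refine ⟨K, hK0, ?_⟩
  intro Ω _ hP T hT Y hInt hCent hCov z s φ hz hs hφ hφs
  have h := hKP Ω hP T hT Y hInt hCent hCov z s φ hz hs hφ hφs 0 (by omega)
  simp only [Nat.zero_add] at h
  exact h
end

section
/- For every integer h ≥ 1 and real numbers C > 0 and β ∈ (0,1) there exists a constant C′ > 0, depending only on h, C and β, with the following property. Let T ≥ 1 and let (Y_i), 1 ≤ i ≤ T, be centered real random variables (E Y_i = 0) such that every product Π_{l=1}^{v} Y_{t_l} with v ≤ 2h and t₁ ≤ … ≤ t_v in {1,…,T} is integrable, and such that for all 1 ≤ j < v ≤ 2h and all times t₁ ≤ … ≤ t_v the bound |E[(Π_{l=1}^{j} Y_{t_l})(Π_{l=j+1}^{v} Y_{t_l})] − E[Π_{l=1}^{j} Y_{t_l}]·E[Π_{l=j+1}^{v} Y_{t_l}]| ≤ C·β^{t_{j+1}−t_j}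 holds. Then for all nonnegative weights k₁, …, k_T with Σ_{i=1}^T k_i = 1 one has E[(Σ_{i=1}^T k_i Y_i)^{2h}] ≤ C′·(max_{1≤i≤T} k_i)^h. -/
open MeasureTheory

namespace Stmt12Aux

lemma prod_range_getD (f : ℕ → ℝ) : ∀ (L : List ℕ),
    ∏ i ∈ Finset.range L.length, f (L.getD i 0) = (L.map f).prod
  | [] => by simp
  | a :: L => by
    rw [List.length_cons, Finset.prod_range_succ']
    simp only [List.getD_cons_succ, List.getD_cons_zero, List.map_cons, List.prod_cons]
    rw [prod_range_getD f L]; ring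

lemma prod_Icc_getD (f : ℕ → ℝ) (L : List ℕ) :
    ∏ l ∈ Finset.Icc 1 L.length, f (L.getD (l - 1) 0) = (L.map f).prod := by
  rw [← Finset.Ico_add_one_right_eq_Icc, Finset.prod_Ico_eq_prod_range, ← prod_range_getD f L]
  apply Finset.prod_congr (by simp)
  intro i _
  have : 1 + i - 1 = i := by omega
  rw [this]

lemma getD_take (L : List ℕ) (i j : ℕ) (h : i < j) (h2 : i < L.length) :
    (L.take j).getD i 0 = L.getD i 0 := by
  rw [List.getD_eq_getElem, List.getD_eq_getElem, List.getElem_take] <;> simp <;> omega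

lemma getD_drop (L : List ℕ) (i j : ℕ) (h : i + j < L.length) :
    (L.drop i).getD j 0 = L.getD (i + j) 0 := by
  rw [List.getD_eq_getElem, List.getD_eq_getElem, List.getElem_drop] <;> simp <;> omega

lemma prod_Icc_getD_take (f : ℕ → ℝ) (L : List ℕ) (j : ℕ) (hj : j ≤ L.length) :
    ∏ l ∈ Finset.Icc 1 j, f (L.getD (l - 1) 0) = ((L.take j).map f).prod := by
  rw [← prod_Icc_getD f (L.take j), List.length_take, min_eq_left hj]
  apply Finset.prod_congr rfl
  intro l hl
  simp only [Finset.mem_Icc] at hl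
  rw [getD_take L (l - 1) j (by omega) (by omega)]

lemma prod_Icc_getD_drop (f : ℕ → ℝ) (L : List ℕ) (j : ℕ) (hj : j ≤ L.length) :
    ∏ l ∈ Finset.Icc (j + 1) L.length, f (L.getD (l - 1) 0) = ((L.drop j).map f).prod := by
  rw [← prod_Icc_getD f (L.drop j), List.length_drop]
  rw [← Finset.Ico_add_one_right_eq_Icc, ← Finset.Ico_add_one_right_eq_Icc, Finset.prod_Ico_eq_prod_range,
    Finset.prod_Ico_eq_prod_range]
  have : L.length + 1 - (j + 1) = L.length - j + 1 - 1 := by omega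
  rw [this]
  apply Finset.prod_congr rfl
  intro i hi
  simp only [Finset.mem_range] at hi
  have e1 : 1 + i - 1 = i := by omega
  have e2 : j + 1 + i - 1 = j + i := by omega
  rw [e1, e2, getD_drop L j i (by omega)]

lemma sorted_getD_mono {L : List ℕ} (hs : L.Pairwise (· ≤ ·)) {i j : ℕ} (hij : i ≤ j)
    (hj : j < L.length) : L.getD i 0 ≤ L.getD j 0 := by
  rw [List.getD_eq_getElem L 0 (lt_of_le_of_lt hij hj), List.getD_eq_getElem L 0 hj]
  rcases eq_or_lt_of_le hij with rfl | hlt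
  · rfl
  · exact List.Pairwise.rel_get_of_lt hs (show (⟨i, _⟩ : Fin _) < ⟨j, hj⟩ from hlt)

lemma telescope_gaps {L : List ℕ} (hs : L.Pairwise (· ≤ ·)) :
    ∀ n, n < L.length →
      ∑ i ∈ Finset.range n, (L.getD (i + 1) 0 - L.getD i 0) = L.getD n 0 - L.getD 0 0 := by
  intro n
  induction n with
  | zero => simp
  | succ n ih =>
    intro hn
    rw [Finset.sum_range_succ, ih (by omega)]
    have h1 : L.getD 0 0 ≤ L.getD n 0 := sorted_getD_mono hs (Nat.zero_le n) (by omega)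
    have h2 : L.getD n 0 ≤ L.getD (n + 1) 0 := sorted_getD_mono hs (by omega) hn
    omega

lemma sorted_eq_of_head_gaps {L L' : List ℕ} (hs : L.Pairwise (· ≤ ·)) (hs' : L'.Pairwise (· ≤ ·))
    (hlen : L.length = L'.length) (hhead : L.getD 0 0 = L'.getD 0 0)
    (hgaps : ∀ i, i + 1 < L.length →
      L.getD (i + 1) 0 - L.getD i 0 = L'.getD (i + 1) 0 - L'.getD i 0) :
    L = L' := by
  have key : ∀ i, i < L.length → L.getD i 0 = L'.getD i 0 := by
    intro i
    induction i with
    | zero => intro _; exact hhead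
    | succ i ih =>
      intro hi
      have h1 : L.getD i 0 ≤ L.getD (i + 1) 0 := sorted_getD_mono hs (by omega) hi
      have h2 : L'.getD i 0 ≤ L'.getD (i + 1) 0 := sorted_getD_mono hs' (by omega) (by omega)
      have := hgaps i hi
      have := ih (by omega)
      omega
  apply List.ext_getElem hlen
  intro i h1 h2
  have := key i h1
  rwa [List.getD_eq_getElem _ _ h1, List.getD_eq_getElem _ _ h2] at this

lemma list_prod_le_pow {L : List ℝ} {M : ℝ} (h0 : ∀ x ∈ L, 0 ≤ x) (h1 : ∀ x ∈ L, x ≤ M) :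
    L.prod ≤ M ^ L.length := by
  induction L with
  | nil => simp
  | cons a L ih =>
    simp only [List.prod_cons, List.length_cons, pow_succ]
    rw [mul_comm (M ^ L.length) M]
    have hM : 0 ≤ M := le_trans (h0 a (by simp)) (h1 a (by simp))
    exact mul_le_mul (h1 a (by simp)) (ih (fun x hx => h0 x (by simp [hx]))
      (fun x hx => h1 x (by simp [hx]))) (List.prod_nonneg (fun x hx => h0 x (by simp [hx]))) hM

lemma monotone_tuple_eq_of_multiset {n : ℕ} {f f' : Fin n → ℕ} (hf : Monotone f)
    (hf' : Monotone f') (h : Finset.univ.val.map f = Finset.univ.val.map f') : f = f' := by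
  rw [Fin.univ_val_map, Fin.univ_val_map, Multiset.coe_eq_coe] at h
  have := List.Perm.eq_of_sortedLE (List.sortedLE_ofFn_iff.2 hf) (List.sortedLE_ofFn_iff.2 hf') h
  funext i
  have h1 := List.getElem_ofFn (f := f) (i := i.1) (by simp)
  have h2 := List.getElem_ofFn (f := f') (i := i.1) (by simp)
  rw [← Fin.eta i i.isLt, ← h1, ← h2]
  congr 1

end Stmt12Aux

namespace Stmt12Aux

def msort (m : Multiset ℕ) : List ℕ := Multiset.sort m (· ≤ ·)

lemma msort_sorted (m : Multiset ℕ) : (msort m).Pairwise (· ≤ ·) := Multiset.pairwise_sort m _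

lemma msort_coe (m : Multiset ℕ) : (↑(msort m) : Multiset ℕ) = m := Multiset.sort_eq m _

lemma msort_length (m : Multiset ℕ) : (msort m).length = Multiset.card m := by
  conv_rhs => rw [← msort_coe m]
  simp

def mtake (j : ℕ) (m : Multiset ℕ) : Multiset ℕ := ((msort m).take j : List ℕ)

def mdrop (j : ℕ) (m : Multiset ℕ) : Multiset ℕ := ((msort m).drop j : List ℕ)

def mspan (m : Multiset ℕ) : ℕ :=
  (msort m).getD (Multiset.card m - 1) 0 - (msort m).getD 0 0

noncomputable def wgt (k : ℕ → ℝ) (m : Multiset ℕ) : ℝ := (Multiset.map k m).prod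

noncomputable def itg {Ω : Type} [MeasureSpace Ω] (Y : ℕ → Ω → ℝ) (m : Multiset ℕ) : ℝ :=
  ∫ ω, (Multiset.map (fun i => Y i ω) m).prod

def msets (T v : ℕ) : Finset (Multiset ℕ) :=
  ((Finset.Icc 1 T).sym v).map ⟨Sym.toMultiset, fun a b hab => Subtype.ext hab⟩

lemma mem_msets {T v : ℕ} {m : Multiset ℕ} :
    m ∈ msets T v ↔ Multiset.card m = v ∧ ∀ x ∈ m, x ∈ Finset.Icc 1 T := by
  constructor
  · rintro hm
    rw [msets, Finset.mem_map] at hm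
    obtain ⟨s, hs, rfl⟩ := hm
    exact ⟨s.2, fun x hx => Finset.mem_sym_iff.1 hs x hx⟩
  · rintro ⟨hcard, hmem⟩
    rw [msets, Finset.mem_map]
    exact ⟨⟨m, hcard⟩, Finset.mem_sym_iff.2 (fun a ha => hmem a ha), rfl⟩

lemma mtake_add_mdrop (j : ℕ) (m : Multiset ℕ) : mtake j m + mdrop j m = m := by
  rw [mtake, mdrop]
  rw [show ((List.take j (msort m) : List ℕ) : Multiset ℕ) + (List.drop j (msort m) : List ℕ)
      = ((List.take j (msort m) ++ List.drop j (msort m) : List ℕ) : Multiset ℕ) from rfl]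
  rw [List.take_append_drop, msort_coe]

lemma card_mtake (j : ℕ) (m : Multiset ℕ) (hj : j ≤ Multiset.card m) :
    Multiset.card (mtake j m) = j := by
  rw [mtake, Multiset.coe_card, List.length_take, msort_length, min_eq_left hj]

lemma card_mdrop (j : ℕ) (m : Multiset ℕ) :
    Multiset.card (mdrop j m) = Multiset.card m - j := by
  rw [mdrop, Multiset.coe_card, List.length_drop, msort_length]

lemma wgt_add (k : ℕ → ℝ) (m₁ m₂ : Multiset ℕ) :
    wgt k (m₁ + m₂) = wgt k m₁ * wgt k m₂ := by
  rw [wgt, wgt, wgt, Multiset.map_add, Multiset.prod_add]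

lemma wgt_nonneg {k : ℕ → ℝ} {m : Multiset ℕ} (hk : ∀ x ∈ m, 0 ≤ k x) : 0 ≤ wgt k m := by
  rw [wgt, ← msort_coe m, Multiset.map_coe, Multiset.prod_coe]
  exact List.prod_nonneg (by
    intro x hx
    rw [List.mem_map] at hx
    obtain ⟨a, ha, rfl⟩ := hx
    exact hk a (by rw [← msort_coe m]; exact_mod_cast ha))

lemma prod_Icc_eq_wgtprod (f : ℕ → ℝ) (m : Multiset ℕ) :
    ∏ l ∈ Finset.Icc 1 (Multiset.card m), f ((msort m).getD (l - 1) 0)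
      = (Multiset.map f m).prod := by
  rw [← msort_length m, prod_Icc_getD, ← msort_coe m, Multiset.map_coe, Multiset.prod_coe]
  rw [msort_coe]

lemma prod_Icc_eq_mtake (f : ℕ → ℝ) (m : Multiset ℕ) (j : ℕ) (hj : j ≤ Multiset.card m) :
    ∏ l ∈ Finset.Icc 1 j, f ((msort m).getD (l - 1) 0)
      = (Multiset.map f (mtake j m)).prod := by
  rw [mtake, Multiset.map_coe, Multiset.prod_coe, prod_Icc_getD_take f _ j (by rw [msort_length]; exact hj)]

lemma prod_Icc_eq_mdrop (f : ℕ → ℝ) (m : Multiset ℕ) (j : ℕ) (hj : j ≤ Multiset.card m) :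
    ∏ l ∈ Finset.Icc (j + 1) (Multiset.card m), f ((msort m).getD (l - 1) 0)
      = (Multiset.map f (mdrop j m)).prod := by
  rw [mdrop, Multiset.map_coe, Multiset.prod_coe, ← msort_length m,
    prod_Icc_getD_drop f _ j (by rw [msort_length]; exact hj)]

end Stmt12Aux

namespace Stmt12Aux

lemma mtake_mem_msets {T v j : ℕ} {m : Multiset ℕ} (hm : m ∈ msets T v) (hj : j ≤ v) :
    mtake j m ∈ msets T j := by
  obtain ⟨hcard, hel⟩ := mem_msets.1 hm
  refine mem_msets.2 ⟨by rw [card_mtake j m (by omega)], fun x hx => hel x ?_⟩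
  have : mtake j m ≤ m := by
    conv_rhs => rw [← mtake_add_mdrop j m]
    exact Multiset.le_add_right _ _
  exact Multiset.mem_of_le this hx

lemma mdrop_mem_msets {T v j : ℕ} {m : Multiset ℕ} (hm : m ∈ msets T v) :
    mdrop j m ∈ msets T (v - j) := by
  obtain ⟨hcard, hel⟩ := mem_msets.1 hm
  refine mem_msets.2 ⟨by rw [card_mdrop, hcard], fun x hx => hel x ?_⟩
  have : mdrop j m ≤ m := by
    conv_rhs => rw [← mtake_add_mdrop j m]
    exact Multiset.le_add_left _ _
  exact Multiset.mem_of_le this hx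

lemma wgt_nonneg_of_mem {T v : ℕ} {k : ℕ → ℝ} (hk : ∀ i ∈ Finset.Icc 1 T, 0 ≤ k i)
    {m : Multiset ℕ} (hm : m ∈ msets T v) : 0 ≤ wgt k m :=
  wgt_nonneg (fun x hx => hk x ((mem_msets.1 hm).2 x hx))

lemma sum_split (T v j : ℕ) (hjv : j ≤ v) (k : ℕ → ℝ)
    (hk : ∀ i ∈ Finset.Icc 1 T, 0 ≤ k i) (G : Multiset ℕ → ℝ) (hG : ∀ m, 0 ≤ G m) :
    ∑ m ∈ msets T v, wgt k m * (G (mtake j m) * G (mdrop j m))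
      ≤ (∑ m ∈ msets T j, wgt k m * G m) * (∑ m ∈ msets T (v - j), wgt k m * G m) := by
  have key : ∀ m ∈ msets T v, wgt k m * (G (mtake j m) * G (mdrop j m))
      = (fun p : Multiset ℕ × Multiset ℕ => (wgt k p.1 * G p.1) * (wgt k p.2 * G p.2))
        ((fun m => (mtake j m, mdrop j m)) m) := by
    intro m _
    simp only
    rw [show wgt k m = wgt k (mtake j m) * wgt k (mdrop j m) by
      rw [← wgt_add, mtake_add_mdrop]]
    ring
  rw [Finset.sum_congr rfl key]
  have hinj : ∀ x ∈ msets T v, ∀ y ∈ msets T v,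
      (fun m => (mtake j m, mdrop j m)) x = (fun m => (mtake j m, mdrop j m)) y → x = y := by
    intro x _ y _ hxy
    simp only [Prod.mk.injEq] at hxy
    rw [← mtake_add_mdrop j x, hxy.1, hxy.2, mtake_add_mdrop]
  rw [← Finset.sum_image (f := fun p : Multiset ℕ × Multiset ℕ =>
    wgt k p.1 * G p.1 * (wgt k p.2 * G p.2)) hinj]
  rw [Finset.sum_mul_sum]
  rw [← Finset.sum_product']
  apply Finset.sum_le_sum_of_subset_of_nonneg
  · intro p hp
    rw [Finset.mem_image] at hp
    obtain ⟨m, hm, rfl⟩ := hp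
    exact Finset.mem_product.2 ⟨mtake_mem_msets hm hjv, mdrop_mem_msets hm⟩
  · intro p hp _
    rw [Finset.mem_product] at hp
    exact mul_nonneg (mul_nonneg (wgt_nonneg_of_mem hk hp.1) (hG _))
      (mul_nonneg (wgt_nonneg_of_mem hk hp.2) (hG _))

end Stmt12Aux

namespace Stmt12Aux

lemma wgt_eq (k : ℕ → ℝ) (m : Multiset ℕ) : wgt k m = ((msort m).map k).prod := by
  rw [wgt]
  conv_lhs => rw [← msort_coe m]
  rw [Multiset.map_coe, Multiset.prod_coe]

lemma mem_of_mem_msort {m : Multiset ℕ} {x : ℕ} (hx : x ∈ msort m) : x ∈ m := by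
  have h3 : x ∈ (↑(msort m) : Multiset ℕ) := by exact_mod_cast hx
  rwa [msort_coe] at h3

lemma sum_geo (T v : ℕ) (hv2 : 2 ≤ v) (k : ℕ → ℝ)
    (hk : ∀ i ∈ Finset.Icc 1 T, 0 ≤ k i) (hksum : ∑ i ∈ Finset.Icc 1 T, k i = 1)
    (Mx : ℝ) (hMx : ∀ i ∈ Finset.Icc 1 T, k i ≤ Mx) (hMx0 : 0 ≤ Mx)
    (γ : ℝ) (hγ0 : 0 < γ) (hγ1 : γ < 1) :
    ∑ m ∈ msets T v, wgt k m * γ ^ mspan m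
      ≤ Mx ^ (v - 1) * (1 - γ)⁻¹ ^ (v - 1) := by
  classical
  set φ : Multiset ℕ → ℕ × (Fin (v - 1) → ℕ) := fun m =>
    ((msort m).getD 0 0, fun i => (msort m).getD (i.1 + 1) 0 - (msort m).getD i.1 0) with hφ
  set g : ℕ × (Fin (v - 1) → ℕ) → ℝ := fun p =>
    (k p.1 * Mx ^ (v - 1)) * ∏ i, γ ^ (p.2 i) with hg
  -- pointwise bound
  have hpt : ∀ m ∈ msets T v, wgt k m * γ ^ mspan m ≤ g (φ m) := by
    intro m hm
    obtain ⟨hcard, hel⟩ := mem_msets.1 hm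
    have hlen : (msort m).length = v := by rw [msort_length, hcard]
    have hspan : γ ^ mspan m = ∏ i : Fin (v - 1), γ ^ ((φ m).2 i) := by
      rw [Finset.prod_pow_eq_pow_sum]
      congr 1
      rw [hφ]
      simp only
      rw [Fin.sum_univ_eq_sum_range (fun i => (msort m).getD (i + 1) 0 - (msort m).getD i 0)]
      rw [telescope_gaps (msort_sorted m) (v - 1) (by omega), mspan, hcard]
    have hwgt : wgt k m ≤ k ((φ m).1) * Mx ^ (v - 1) := by
      have hne : msort m ≠ [] := by
        intro hnil
        rw [hnil] at hlen
        simp at hlen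
        omega
      obtain ⟨a, L', hL⟩ := List.exists_cons_of_ne_nil hne
      have hmem' : ∀ x ∈ msort m, x ∈ Finset.Icc 1 T := fun x hx => hel x (mem_of_mem_msort hx)
      rw [wgt_eq, hL]
      simp only [List.map_cons, List.prod_cons]
      have h1 : (msort m).getD 0 0 = a := by rw [hL]; rfl
      show k a * (List.map k L').prod ≤ k ((msort m).getD 0 0) * Mx ^ (v - 1)
      rw [h1]
      have hL'len : L'.length = v - 1 := by
        rw [hL] at hlen
        simp at hlen
        omega
      have hbound : (L'.map k).prod ≤ Mx ^ (v - 1) := by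
        rw [← hL'len, ← List.length_map (as := L') k]
        apply list_prod_le_pow
        · intro x hx
          rw [List.mem_map] at hx
          obtain ⟨b, hb, rfl⟩ := hx
          exact hk b (hmem' b (by rw [hL]; simp [hb]))
        · intro x hx
          rw [List.mem_map] at hx
          obtain ⟨b, hb, rfl⟩ := hx
          exact hMx b (hmem' b (by rw [hL]; simp [hb]))
      have hka : 0 ≤ k a := hk a (hmem' a (by rw [hL]; simp))
      exact mul_le_mul_of_nonneg_left hbound hka
    rw [hspan]
    rw [hg]
    simp only
    apply mul_le_mul_of_nonneg_right hwgt
    exact Finset.prod_nonneg (fun i _ => pow_nonneg hγ0.le _)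
  refine le_trans (Finset.sum_le_sum hpt) ?_
  -- injectivity
  have hinj : ∀ x ∈ msets T v, ∀ y ∈ msets T v, φ x = φ y → x = y := by
    intro x hx y hy hxy
    obtain ⟨hcx, _⟩ := mem_msets.1 hx
    obtain ⟨hcy, _⟩ := mem_msets.1 hy
    have hlx : (msort x).length = v := by rw [msort_length, hcx]
    have hly : (msort y).length = v := by rw [msort_length, hcy]
    have h1 : (φ x).1 = (φ y).1 := by rw [hxy]
    have h2 : (φ x).2 = (φ y).2 := by rw [hxy]
    have heq : msort x = msort y := by
      apply sorted_eq_of_head_gaps (msort_sorted x) (msort_sorted y) (by rw [hlx, hly])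
      · exact h1
      · intro i hi
        have hiv : i < v - 1 := by omega
        have := congrFun h2 ⟨i, hiv⟩
        exact this
    rw [← msort_coe x, ← msort_coe y, heq]
  rw [← Finset.sum_image (f := g) hinj]
  have hsub : (msets T v).image φ ⊆
      (Finset.Icc 1 T) ×ˢ (Fintype.piFinset (fun _ : Fin (v - 1) => Finset.range (T + 1))) := by
    intro p hp
    rw [Finset.mem_image] at hp
    obtain ⟨m, hm, rfl⟩ := hp
    obtain ⟨hcard, hel⟩ := mem_msets.1 hm
    have hlen : (msort m).length = v := by rw [msort_length, hcard]
    have hmem' : ∀ i, i < v → (msort m).getD i 0 ∈ Finset.Icc 1 T := by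
      intro i hi
      rw [List.getD_eq_getElem _ _ (by omega)]
      exact hel _ (mem_of_mem_msort (List.getElem_mem _))
    rw [Finset.mem_product]
    constructor
    · exact hmem' 0 (by omega)
    · rw [Fintype.mem_piFinset]
      intro i
      rw [Finset.mem_range]
      show (msort m).getD (i.1 + 1) 0 - (msort m).getD i.1 0 < T + 1
      have := hmem' (i.1 + 1) (by omega)
      rw [Finset.mem_Icc] at this
      omega
  refine le_trans (Finset.sum_le_sum_of_subset_of_nonneg hsub ?_) ?_
  · intro p hp _
    rw [Finset.mem_product] at hp
    exact mul_nonneg (mul_nonneg (hk p.1 hp.1) (pow_nonneg hMx0 _))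
      (Finset.prod_nonneg (fun i _ => pow_nonneg hγ0.le _))
  -- factorize
  rw [hg]
  simp only
  rw [Finset.sum_product]
  have hfac : ∀ a : ℕ, ∑ b ∈ Fintype.piFinset (fun _ : Fin (v - 1) => Finset.range (T + 1)),
      (k a * Mx ^ (v - 1)) * ∏ i, γ ^ (b i)
      = (k a * Mx ^ (v - 1)) * (∑ x ∈ Finset.range (T + 1), γ ^ x) ^ (v - 1) := by
    intro a
    rw [← Finset.mul_sum]
    congr 1
    rw [← Finset.prod_univ_sum]
    rw [Finset.prod_const, Finset.card_univ, Fintype.card_fin]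
  rw [Finset.sum_congr rfl (fun a _ => hfac a)]
  have hgeo : (∑ x ∈ Finset.range (T + 1), γ ^ x) ≤ (1 - γ)⁻¹ := by
    refine ((summable_geometric_of_lt_one hγ0.le hγ1).sum_le_tsum _
      (fun i _ => pow_nonneg hγ0.le i)).trans ?_
    rw [tsum_geometric_of_lt_one hγ0.le hγ1]
  have hgeo0 : (0:ℝ) ≤ ∑ x ∈ Finset.range (T + 1), γ ^ x :=
    Finset.sum_nonneg (fun i _ => pow_nonneg hγ0.le i)
  calc ∑ a ∈ Finset.Icc 1 T, (k a * Mx ^ (v - 1)) * (∑ x ∈ Finset.range (T + 1), γ ^ x) ^ (v - 1)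
      = (Mx ^ (v - 1) * (∑ x ∈ Finset.range (T + 1), γ ^ x) ^ (v - 1)) *
        (∑ a ∈ Finset.Icc 1 T, k a) := by
        rw [Finset.mul_sum]
        apply Finset.sum_congr rfl
        intro a _
        ring
    _ = Mx ^ (v - 1) * (∑ x ∈ Finset.range (T + 1), γ ^ x) ^ (v - 1) := by
        rw [hksum, mul_one]
    _ ≤ Mx ^ (v - 1) * (1 - γ)⁻¹ ^ (v - 1) := by
        apply mul_le_mul_of_nonneg_left _ (pow_nonneg hMx0 _)
        exact pow_le_pow_left₀ hgeo0 hgeo _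

end Stmt12Aux

namespace Stmt12Aux

lemma itg_eq_prod_Icc {Ω : Type} [MeasureSpace Ω] (Y : ℕ → Ω → ℝ) (m : Multiset ℕ) :
    itg Y m = ∫ ω, ∏ l ∈ Finset.Icc 1 (Multiset.card m), Y ((msort m).getD (l - 1) 0) ω := by
  rw [itg]
  congr 1
  funext ω
  rw [← prod_Icc_eq_wgtprod (fun i => Y i ω) m]

lemma step_bound {Ω : Type} [MeasureSpace Ω] (Y : ℕ → Ω → ℝ) (T h : ℕ) (hh : 1 ≤ h)
    (C β γ : ℝ) (hγ0 : 0 < γ) (hγ1 : γ < 1) (hγβ : γ ^ (2 * h - 1) = β)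
    (hcov : ∀ j v : ℕ, 1 ≤ j → j < v → v ≤ 2 * h → ∀ t : ℕ → ℕ,
        (∀ l, 1 ≤ l → l ≤ v → 1 ≤ t l ∧ t l ≤ T) →
        (∀ l l', 1 ≤ l → l ≤ l' → l' ≤ v → t l ≤ t l') →
        |(∫ ω, (∏ l ∈ Finset.Icc 1 j, Y (t l) ω) *
              (∏ l ∈ Finset.Icc (j + 1) v, Y (t l) ω)) -
            (∫ ω, ∏ l ∈ Finset.Icc 1 j, Y (t l) ω) *
              (∫ ω, ∏ l ∈ Finset.Icc (j + 1) v, Y (t l) ω)|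
          ≤ C * β ^ (t (j + 1) - t j))
    (hC : 0 < C)
    (v : ℕ) (hv2 : 2 ≤ v) (hv : v ≤ 2 * h) (m : Multiset ℕ) (hm : m ∈ msets T v) :
    |itg Y m| ≤ C * γ ^ mspan m +
      ∑ j ∈ Finset.Icc 1 (v - 1), |itg Y (mtake j m)| * |itg Y (mdrop j m)| := by
  obtain ⟨hcard, hel⟩ := mem_msets.1 hm
  have hlen : (msort m).length = v := by rw [msort_length, hcard]
  set L := msort m with hLdef
  set t : ℕ → ℕ := fun l => L.getD (l - 1) 0 with ht
  have htb : ∀ l, 1 ≤ l → l ≤ v → 1 ≤ t l ∧ t l ≤ T := by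
    intro l h1 h2
    have : t l ∈ Finset.Icc 1 T := by
      rw [ht]
      simp only
      rw [List.getD_eq_getElem _ _ (by omega)]
      exact hel _ (mem_of_mem_msort (List.getElem_mem _))
    rw [Finset.mem_Icc] at this
    exact this
  have hlen' : (msort m).length = v := by rw [← hLdef]; exact hlen
  have htm : ∀ l l', 1 ≤ l → l ≤ l' → l' ≤ v → t l ≤ t l' :=
    fun l l' h1 h2 h3 => sorted_getD_mono (msort_sorted m) (by omega) (by omega)
  -- choose the maximal gap
  obtain ⟨jm, hjmmem, hjmax⟩ := Finset.exists_max_image (Finset.range (v - 1))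
    (fun i => L.getD (i + 1) 0 - L.getD i 0) ⟨0, by rw [Finset.mem_range]; omega⟩
  rw [Finset.mem_range] at hjmmem
  have hco := hcov (jm + 1) v (by omega) (by omega) hv t htb htm
  -- product splitting
  have hsplit : ∀ ω, (∏ l ∈ Finset.Icc 1 v, Y (t l) ω)
      = (∏ l ∈ Finset.Icc 1 (jm + 1), Y (t l) ω) *
        (∏ l ∈ Finset.Icc (jm + 1 + 1) v, Y (t l) ω) := by
    intro ω
    rw [show Finset.Icc 1 v = Finset.Ioc 0 v from (Finset.Icc_add_one_left_eq_Ioc 0 v),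
      show Finset.Icc 1 (jm + 1) = Finset.Ioc 0 (jm + 1) from (Finset.Icc_add_one_left_eq_Ioc 0 (jm + 1)),
      show Finset.Icc (jm + 1 + 1) v = Finset.Ioc (jm + 1) v from (Finset.Icc_add_one_left_eq_Ioc (jm + 1) v)]
    exact (Finset.prod_Ioc_consecutive _ (by omega) (by omega)).symm
  have hitg : itg Y m = ∫ ω, (∏ l ∈ Finset.Icc 1 (jm + 1), Y (t l) ω) *
      (∏ l ∈ Finset.Icc (jm + 1 + 1) v, Y (t l) ω) := by
    rw [itg_eq_prod_Icc, hcard]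
    congr 1
    funext ω
    exact hsplit ω
  have hL' : itg Y (mtake (jm + 1) m) = ∫ ω, ∏ l ∈ Finset.Icc 1 (jm + 1), Y (t l) ω := by
    rw [itg]
    congr 1
    funext ω
    rw [← prod_Icc_eq_mtake (fun i => Y i ω) m (jm + 1) (by omega)]
  have hR' : itg Y (mdrop (jm + 1) m) = ∫ ω, ∏ l ∈ Finset.Icc (jm + 1 + 1) v, Y (t l) ω := by
    rw [itg]
    congr 1
    funext ω
    rw [← hcard, ← prod_Icc_eq_mdrop (fun i => Y i ω) m (jm + 1) (by rw [hcard]; omega)]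
  -- triangle inequality
  have htri : |itg Y m| ≤ C * β ^ (t (jm + 1 + 1) - t (jm + 1)) +
      |itg Y (mtake (jm + 1) m)| * |itg Y (mdrop (jm + 1) m)| := by
    rw [hitg, hL', hR']
    set A := ∫ ω, (∏ l ∈ Finset.Icc 1 (jm + 1), Y (t l) ω) *
      (∏ l ∈ Finset.Icc (jm + 1 + 1) v, Y (t l) ω)
    set B := ∫ ω, ∏ l ∈ Finset.Icc 1 (jm + 1), Y (t l) ω
    set D := ∫ ω, ∏ l ∈ Finset.Icc (jm + 1 + 1) v, Y (t l) ω
    calc |A| ≤ |A - B * D| + |B * D| := by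
          have := abs_add_le (A - B * D) (B * D)
          simpa using this
      _ ≤ C * β ^ (t (jm + 1 + 1) - t (jm + 1)) + |B| * |D| := by
          apply add_le_add hco
          rw [abs_mul]
  -- gap bound
  have hgap : β ^ (t (jm + 1 + 1) - t (jm + 1)) ≤ γ ^ mspan m := by
    have e1 : t (jm + 1 + 1) - t (jm + 1) = L.getD (jm + 1) 0 - L.getD jm 0 := rfl
    rw [e1, ← hγβ, ← pow_mul]
    apply pow_le_pow_of_le_one hγ0.le hγ1.le
    have htel : mspan m = ∑ i ∈ Finset.range (v - 1), (L.getD (i + 1) 0 - L.getD i 0) := by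
      rw [mspan, hcard, telescope_gaps (msort_sorted m) (v - 1) (by omega)]
    rw [htel]
    calc ∑ i ∈ Finset.range (v - 1), (L.getD (i + 1) 0 - L.getD i 0)
        ≤ (Finset.range (v - 1)).card * (L.getD (jm + 1) 0 - L.getD jm 0) := by
          apply Finset.sum_le_card_nsmul
          intro x hx
          exact hjmax x hx
      _ ≤ (2 * h - 1) * (L.getD (jm + 1) 0 - L.getD jm 0) := by
          apply Nat.mul_le_mul_right
          rw [Finset.card_range]
          omega
  refine le_trans htri (add_le_add ?_ ?_)
  · exact mul_le_mul_of_nonneg_left hgap hC.le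
  · apply Finset.single_le_sum (f := fun j => |itg Y (mtake j m)| * |itg Y (mdrop j m)|)
      (fun i _ => mul_nonneg (abs_nonneg _) (abs_nonneg _))
    rw [Finset.mem_Icc]
    omega

end Stmt12Aux

namespace Stmt12Aux

lemma key_induction {Ω : Type} [MeasureSpace Ω] (hprob : IsProbabilityMeasure (volume : Measure Ω))
    (Y : ℕ → Ω → ℝ) (T h : ℕ) (hh : 1 ≤ h) (hT : 1 ≤ T)
    (C β γ Mx Q : ℝ) (hC : 0 < C) (hγ0 : 0 < γ) (hγ1 : γ < 1) (hγβ : γ ^ (2 * h - 1) = β)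
    (hcent : ∀ i : ℕ, 1 ≤ i → i ≤ T → ∫ ω, Y i ω = 0)
    (hcov : ∀ j v : ℕ, 1 ≤ j → j < v → v ≤ 2 * h → ∀ t : ℕ → ℕ,
        (∀ l, 1 ≤ l → l ≤ v → 1 ≤ t l ∧ t l ≤ T) →
        (∀ l l', 1 ≤ l → l ≤ l' → l' ≤ v → t l ≤ t l') →
        |(∫ ω, (∏ l ∈ Finset.Icc 1 j, Y (t l) ω) *
              (∏ l ∈ Finset.Icc (j + 1) v, Y (t l) ω)) -
            (∫ ω, ∏ l ∈ Finset.Icc 1 j, Y (t l) ω) *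
              (∫ ω, ∏ l ∈ Finset.Icc (j + 1) v, Y (t l) ω)|
          ≤ C * β ^ (t (j + 1) - t j))
    (k : ℕ → ℝ) (hk : ∀ i ∈ Finset.Icc 1 T, 0 ≤ k i)
    (hksum : ∑ i ∈ Finset.Icc 1 T, k i = 1)
    (hMx : ∀ i ∈ Finset.Icc 1 T, k i ≤ Mx) (hMx0 : 0 ≤ Mx) (hMx1 : Mx ≤ 1)
    (hQCG : C * (1 - γ)⁻¹ ^ (2 * h) ≤ Q) (hQh : (2 * h : ℝ) ≤ Q) (hQ2 : (2:ℝ) ≤ Q) :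
    ∀ v, v ≤ 2 * h →
      ∑ m ∈ msets T v, wgt k m * |itg Y m| ≤ Q ^ (v * v) * Mx ^ ((v + 1) / 2) := by
  have hQ1 : (1:ℝ) ≤ Q := by linarith
  have hQ0 : (0:ℝ) ≤ Q := by linarith
  intro v
  induction v using Nat.strong_induction_on with
  | _ v ih =>
    intro hv
    have hFnonneg : ∀ u, 0 ≤ ∑ m ∈ msets T u, wgt k m * |itg Y m| := by
      intro u
      exact Finset.sum_nonneg (fun m hm =>
        mul_nonneg (wgt_nonneg_of_mem hk hm) (abs_nonneg _))
    rcases Nat.lt_or_ge v 2 with hv2 | hv2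
    · interval_cases v
      · -- v = 0
        have h0 : msets T 0 = {0} := by
          ext m
          simp only [mem_msets, Finset.mem_singleton, Multiset.card_eq_zero]
          constructor
          · rintro ⟨rfl, _⟩; rfl
          · rintro rfl; simp
        rw [h0]
        simp only [Finset.sum_singleton]
        have hw : wgt k 0 = 1 := by simp [wgt]
        have hi : itg Y 0 = 1 := by
          simp only [itg, Multiset.map_zero, Multiset.prod_zero]
          simp [integral_const]
        rw [hw, hi]
        norm_num
      · -- v = 1
        have hz : ∑ m ∈ msets T 1, wgt k m * |itg Y m| = 0 := by
          apply Finset.sum_eq_zero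
          intro m hm
          obtain ⟨hcard, hel⟩ := mem_msets.1 hm
          obtain ⟨a, rfl⟩ := Multiset.card_eq_one.1 hcard
          have ha := hel a (by simp)
          rw [Finset.mem_Icc] at ha
          have : itg Y {a} = 0 := by
            simp only [itg, Multiset.map_singleton, Multiset.prod_singleton]
            exact hcent a ha.1 ha.2
          rw [this, abs_zero, mul_zero]
        rw [hz]
        positivity
    · -- v ≥ 2
      have step : ∀ m ∈ msets T v, wgt k m * |itg Y m|
          ≤ wgt k m * (C * γ ^ mspan m +
            ∑ j ∈ Finset.Icc 1 (v - 1), |itg Y (mtake j m)| * |itg Y (mdrop j m)|) := by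
        intro m hm
        exact mul_le_mul_of_nonneg_left
          (step_bound Y T h hh C β γ hγ0 hγ1 hγβ hcov hC v hv2 hv m hm)
          (wgt_nonneg_of_mem hk hm)
      refine le_trans (Finset.sum_le_sum step) ?_
      have expand : ∑ m ∈ msets T v, wgt k m * (C * γ ^ mspan m +
            ∑ j ∈ Finset.Icc 1 (v - 1), |itg Y (mtake j m)| * |itg Y (mdrop j m)|)
          = C * (∑ m ∈ msets T v, wgt k m * γ ^ mspan m) +
            ∑ j ∈ Finset.Icc 1 (v - 1), ∑ m ∈ msets T v,
              wgt k m * (|itg Y (mtake j m)| * |itg Y (mdrop j m)|) := by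
        rw [Finset.sum_congr rfl (fun m _ => mul_add (wgt k m) _ _), Finset.sum_add_distrib]
        congr 1
        · rw [Finset.mul_sum]
          apply Finset.sum_congr rfl
          intro m _
          ring
        · rw [Finset.sum_comm]
          apply Finset.sum_congr rfl
          intro m _
          rw [Finset.mul_sum]
      rw [expand]
      -- bound the geometric part
      have geo := sum_geo T v hv2 k hk hksum Mx hMx hMx0 γ hγ0 hγ1
      have hinv1 : (1:ℝ) ≤ (1 - γ)⁻¹ := by
        rw [le_inv_comm₀ one_pos (by linarith)]
        linarith
      have geo2 : C * (∑ m ∈ msets T v, wgt k m * γ ^ mspan m)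
          ≤ Q * Mx ^ ((v + 1) / 2) := by
        have b1 : Mx ^ (v - 1) ≤ Mx ^ ((v + 1) / 2) :=
          pow_le_pow_of_le_one hMx0 hMx1 (by omega)
        have b2 : (1 - γ)⁻¹ ^ (v - 1) ≤ (1 - γ)⁻¹ ^ (2 * h) :=
          pow_le_pow_right₀ hinv1 (by omega)
        calc C * (∑ m ∈ msets T v, wgt k m * γ ^ mspan m)
            ≤ C * (Mx ^ (v - 1) * (1 - γ)⁻¹ ^ (v - 1)) :=
              mul_le_mul_of_nonneg_left geo hC.le
          _ ≤ C * (Mx ^ ((v + 1) / 2) * (1 - γ)⁻¹ ^ (2 * h)) := by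
              apply mul_le_mul_of_nonneg_left _ hC.le
              apply mul_le_mul b1 b2 (pow_nonneg (by positivity) _) (pow_nonneg hMx0 _)
          _ = (C * (1 - γ)⁻¹ ^ (2 * h)) * Mx ^ ((v + 1) / 2) := by ring
          _ ≤ Q * Mx ^ ((v + 1) / 2) := by
              apply mul_le_mul_of_nonneg_right hQCG (pow_nonneg hMx0 _)
      -- bound the split part
      have split : ∀ j ∈ Finset.Icc 1 (v - 1),
          ∑ m ∈ msets T v, wgt k m * (|itg Y (mtake j m)| * |itg Y (mdrop j m)|)
            ≤ Q ^ ((v-1) * (v-1) + 1) * Mx ^ ((v + 1) / 2) := by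
        intro j hj
        rw [Finset.mem_Icc] at hj
        refine le_trans (sum_split T v j (by omega) k hk (fun m => |itg Y m|)
          (fun m => abs_nonneg _)) ?_
        have h1 := ih j (by omega) (by omega)
        have h2 := ih (v - j) (by omega) (by omega)
        calc (∑ m ∈ msets T j, wgt k m * |itg Y m|) *
              (∑ m ∈ msets T (v - j), wgt k m * |itg Y m|)
            ≤ (Q ^ (j * j) * Mx ^ ((j + 1) / 2)) *
              (Q ^ ((v-j) * (v-j)) * Mx ^ ((v - j + 1) / 2)) := by
              apply mul_le_mul h1 h2 (hFnonneg _) (by positivity)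
          _ = Q ^ (j * j + (v-j) * (v-j)) * Mx ^ ((j + 1) / 2 + (v - j + 1) / 2) := by
              rw [pow_add, pow_add]
              ring
          _ ≤ Q ^ ((v-1) * (v-1) + 1) * Mx ^ ((v + 1) / 2) := by
              apply mul_le_mul
              · apply pow_le_pow_right₀ hQ1
                obtain ⟨b, rfl⟩ : ∃ b, v = j + b := ⟨v - j, by omega⟩
                obtain ⟨b', rfl⟩ : ∃ b', b = b' + 1 := ⟨b - 1, by omega⟩
                have e1 : j + (b' + 1) - j = b' + 1 := by omega
                have e2 : j + (b' + 1) - 1 = j + b' := by omega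
                rw [e1, e2]
                have hb : b' ≤ j * b' := Nat.le_mul_of_pos_left b' (by omega)
                nlinarith [hb]
              · apply pow_le_pow_of_le_one hMx0 hMx1
                omega
              · exact pow_nonneg hMx0 _
              · exact pow_nonneg hQ0 _
      have splitsum : ∑ j ∈ Finset.Icc 1 (v - 1), ∑ m ∈ msets T v,
            wgt k m * (|itg Y (mtake j m)| * |itg Y (mdrop j m)|)
          ≤ (v - 1 : ℕ) * (Q ^ ((v-1) * (v-1) + 1) * Mx ^ ((v + 1) / 2)) := by
        refine le_trans (Finset.sum_le_card_nsmul _ _ _ split) ?_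
        apply le_of_eq
        rw [Nat.card_Icc, nsmul_eq_mul]
        have e : v - 1 + 1 - 1 = v - 1 := by omega
        rw [e]
      refine le_trans (add_le_add geo2 splitsum) ?_
      have hvQ : ((v:ℝ) - 1) ≤ Q := by
        have : (v:ℝ) ≤ 2 * h := by exact_mod_cast hv
        linarith
      have hcast : ((v - 1 : ℕ) : ℝ) = (v:ℝ) - 1 := by
        have : 1 ≤ v := by omega
        push_cast [this]
        ring
      calc Q * Mx ^ ((v + 1) / 2) +
            (v - 1 : ℕ) * (Q ^ ((v-1) * (v-1) + 1) * Mx ^ ((v + 1) / 2))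
          ≤ Q ^ ((v-1) * (v-1) + 2) * Mx ^ ((v + 1) / 2) +
            Q * (Q ^ ((v-1) * (v-1) + 1) * Mx ^ ((v + 1) / 2)) := by
            apply add_le_add
            · apply mul_le_mul_of_nonneg_right _ (pow_nonneg hMx0 _)
              calc Q = Q ^ 1 := (pow_one Q).symm
                _ ≤ Q ^ ((v-1) * (v-1) + 2) := pow_le_pow_right₀ hQ1 (by omega)
            · apply mul_le_mul_of_nonneg_right _
                (mul_nonneg (pow_nonneg hQ0 _) (pow_nonneg hMx0 _))
              rw [hcast]
              exact hvQ
        _ = 2 * (Q ^ ((v-1) * (v-1) + 2) * Mx ^ ((v + 1) / 2)) := by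
            have e : Q ^ ((v-1) * (v-1) + 2) = Q * Q ^ ((v-1) * (v-1) + 1) := by
              rw [pow_succ]; ring
            rw [e]; ring
        _ ≤ Q ^ ((v-1) * (v-1) + 3) * Mx ^ ((v + 1) / 2) := by
            rw [show (v-1) * (v-1) + 3 = ((v-1) * (v-1) + 2) + 1 from rfl, pow_succ]
            calc 2 * (Q ^ ((v-1) * (v-1) + 2) * Mx ^ ((v + 1) / 2))
                ≤ Q * (Q ^ ((v-1) * (v-1) + 2) * Mx ^ ((v + 1) / 2)) := by
                  apply mul_le_mul_of_nonneg_right hQ2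
                  exact mul_nonneg (pow_nonneg hQ0 _) (pow_nonneg hMx0 _)
              _ = Q ^ ((v-1) * (v-1) + 2) * Q * Mx ^ ((v + 1) / 2) := by ring
        _ ≤ Q ^ (v * v) * Mx ^ ((v + 1) / 2) := by
            apply mul_le_mul_of_nonneg_right _ (pow_nonneg hMx0 _)
            apply pow_le_pow_right₀ hQ1
            obtain ⟨w, rfl⟩ : ∃ w, v = w + 2 := ⟨v - 2, by omega⟩
            have e : w + 2 - 1 = w + 1 := by omega
            rw [e]
            nlinarith []
  
end Stmt12Aux

namespace Stmt12Aux

lemma map_univ_perm {n : ℕ} (σ : Equiv.Perm (Fin n)) :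
    Finset.univ.val.map ⇑σ = Finset.univ.val := by
  calc Finset.univ.val.map ⇑σ = Finset.univ.val.map ⇑σ.toEmbedding := by
        rw [Equiv.coe_toEmbedding]
    _ = (Finset.univ.map σ.toEmbedding).val := (Finset.map_val _ _).symm
    _ = Finset.univ.val := by rw [Finset.map_univ_equiv]

lemma tuple_multiset_card {n : ℕ} (g : Fin n → ℕ) :
    Multiset.card (Finset.univ.val.map g) = n := by
  rw [Multiset.card_map]
  exact Finset.card_univ.trans (Fintype.card_fin n)

lemma tuple_multiset_sort {n : ℕ} (g : Fin n → ℕ) (σ : Equiv.Perm (Fin n)) :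
    Finset.univ.val.map (g ∘ σ) = Finset.univ.val.map g := by
  rw [← Multiset.map_map, map_univ_perm]

lemma sum_tuples_le (T n : ℕ) (G : Multiset ℕ → ℝ) (hG : ∀ m ∈ msets T n, 0 ≤ G m) :
    ∑ g ∈ Fintype.piFinset (fun _ : Fin n => Finset.Icc 1 T), G (Finset.univ.val.map g)
      ≤ (Nat.factorial n) * ∑ m ∈ msets T n, G m := by
  classical
  set φ : (Fin n → ℕ) → Equiv.Perm (Fin n) × Multiset ℕ :=
    fun g => (Tuple.sort g, Finset.univ.val.map g) with hφ
  have hinj : ∀ x ∈ Fintype.piFinset (fun _ : Fin n => Finset.Icc 1 T),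
      ∀ y ∈ Fintype.piFinset (fun _ : Fin n => Finset.Icc 1 T), φ x = φ y → x = y := by
    intro x _ y _ hxy
    rw [hφ] at hxy
    simp only [Prod.mk.injEq] at hxy
    obtain ⟨hσ, hmul⟩ := hxy
    have hmx : Monotone (x ∘ Tuple.sort x) := Tuple.monotone_sort x
    have hmy : Monotone (y ∘ Tuple.sort y) := Tuple.monotone_sort y
    have hms : Finset.univ.val.map (x ∘ Tuple.sort x) = Finset.univ.val.map (y ∘ Tuple.sort y) := by
      rw [tuple_multiset_sort, tuple_multiset_sort, hmul]
    have heq : x ∘ Tuple.sort x = y ∘ Tuple.sort y :=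
      monotone_tuple_eq_of_multiset hmx hmy hms
    rw [hσ] at heq
    funext i
    have := congrFun heq ((Tuple.sort y)⁻¹ i)
    simpa using this
  have hbound : ∀ g ∈ Fintype.piFinset (fun _ : Fin n => Finset.Icc 1 T),
      (fun p : Equiv.Perm (Fin n) × Multiset ℕ => G p.2) (φ g) = G (Finset.univ.val.map g) := by
    intro g _
    rfl
  rw [← Finset.sum_congr rfl hbound]
  rw [← Finset.sum_image (f := fun p : Equiv.Perm (Fin n) × Multiset ℕ => G p.2) hinj]
  have hsub : (Fintype.piFinset (fun _ : Fin n => Finset.Icc 1 T)).image φ ⊆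
      Finset.univ ×ˢ msets T n := by
    intro p hp
    rw [Finset.mem_image] at hp
    obtain ⟨g, hg, rfl⟩ := hp
    rw [Finset.mem_product]
    refine ⟨Finset.mem_univ _, mem_msets.2 ⟨tuple_multiset_card g, ?_⟩⟩
    intro x hx
    rw [Multiset.mem_map] at hx
    obtain ⟨i, _, rfl⟩ := hx
    exact (Fintype.mem_piFinset.1 hg) i
  refine le_trans (Finset.sum_le_sum_of_subset_of_nonneg hsub ?_) ?_
  · intro p hp _
    rw [Finset.mem_product] at hp
    exact hG p.2 hp.2
  · rw [Finset.sum_product]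
    have e : (∑ x : Equiv.Perm (Fin n), ∑ y ∈ msets T n, G (x, y).2)
        = ∑ _x : Equiv.Perm (Fin n), ∑ y ∈ msets T n, G y := rfl
    rw [e, Finset.sum_const, nsmul_eq_mul, Finset.card_univ, Fintype.card_perm, Fintype.card_fin]

lemma final_expand {Ω : Type} [MeasureSpace Ω] (Y : ℕ → Ω → ℝ) (T n : ℕ) (hn : 1 ≤ n)
    (hint : ∀ t : ℕ → ℕ,
        (∀ l, 1 ≤ l → l ≤ n → 1 ≤ t l ∧ t l ≤ T) →
        (∀ l l', 1 ≤ l → l ≤ l' → l' ≤ n → t l ≤ t l') →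
        Integrable (fun ω => ∏ l ∈ Finset.Icc 1 n, Y (t l) ω))
    (k : ℕ → ℝ) :
    (∫ ω, (∑ i ∈ Finset.Icc 1 T, k i * Y i ω) ^ n)
      = ∑ g ∈ Fintype.piFinset (fun _ : Fin n => Finset.Icc 1 T),
          wgt k (Finset.univ.val.map g) * itg Y (Finset.univ.val.map g) := by
  -- integrability of the multiset products
  have hmint : ∀ g ∈ Fintype.piFinset (fun _ : Fin n => Finset.Icc 1 T),
      Integrable (fun ω => (Multiset.map (fun i => Y i ω) (Finset.univ.val.map g)).prod) := by
    intro g hg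
    set m : Multiset ℕ := Finset.univ.val.map g with hm
    have hmm : m ∈ msets T n := by
      refine mem_msets.2 ⟨tuple_multiset_card g, ?_⟩
      intro x hx
      rw [hm, Multiset.mem_map] at hx
      obtain ⟨i, _, rfl⟩ := hx
      exact (Fintype.mem_piFinset.1 hg) i
    obtain ⟨hcard, hel⟩ := mem_msets.1 hmm
    have hlen : (msort m).length = n := by rw [msort_length, hcard]
    set t : ℕ → ℕ := fun l => (msort m).getD (l - 1) 0 with ht
    have htb : ∀ l, 1 ≤ l → l ≤ n → 1 ≤ t l ∧ t l ≤ T := by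
      intro l h1 h2
      have : t l ∈ Finset.Icc 1 T := by
        rw [ht]
        simp only
        rw [List.getD_eq_getElem _ _ (by omega)]
        exact hel _ (mem_of_mem_msort (List.getElem_mem _))
      rw [Finset.mem_Icc] at this
      exact this
    have htm : ∀ l l', 1 ≤ l → l ≤ l' → l' ≤ n → t l ≤ t l' :=
      fun l l' h1 h2 h3 => sorted_getD_mono (msort_sorted m) (by omega) (by omega)
    have hi := hint t htb htm
    have : (fun ω => (Multiset.map (fun i => Y i ω) m).prod)
        = (fun ω => ∏ l ∈ Finset.Icc 1 n, Y (t l) ω) := by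
      funext ω
      rw [← prod_Icc_eq_wgtprod (fun i => Y i ω) m, hcard]
    rw [this]
    exact hi
  have hexp : ∀ ω, (∑ i ∈ Finset.Icc 1 T, k i * Y i ω) ^ n
      = ∑ g ∈ Fintype.piFinset (fun _ : Fin n => Finset.Icc 1 T),
          wgt k (Finset.univ.val.map g) *
            (Multiset.map (fun i => Y i ω) (Finset.univ.val.map g)).prod := by
    intro ω
    have e1 : (∑ i ∈ Finset.Icc 1 T, k i * Y i ω) ^ n
        = ∏ _i : Fin n, (∑ i ∈ Finset.Icc 1 T, k i * Y i ω) := by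
      rw [Finset.prod_const, Finset.card_univ, Fintype.card_fin]
    rw [e1, Finset.prod_univ_sum]
    apply Finset.sum_congr rfl
    intro g _
    rw [Finset.prod_mul_distrib]
    congr 1
    · rw [wgt, Multiset.map_map, Finset.prod_eq_multiset_prod]
      rfl
    · rw [Multiset.map_map, Finset.prod_eq_multiset_prod]
      rfl
  rw [show (fun ω => (∑ i ∈ Finset.Icc 1 T, k i * Y i ω) ^ n) = fun ω =>
      ∑ g ∈ Fintype.piFinset (fun _ : Fin n => Finset.Icc 1 T),
        wgt k (Finset.univ.val.map g) *
          (Multiset.map (fun i => Y i ω) (Finset.univ.val.map g)).prod from funext hexp]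
  rw [integral_finset_sum _ (fun g hg => (hmint g hg).const_mul _)]
  apply Finset.sum_congr rfl
  intro g hg
  rw [integral_const_mul]
  rfl

end Stmt12Aux

open Stmt12Aux

/-- Abstract form of point 3 of Proposition 3 of the supplement: a centered process
with geometrically decaying ordered product covariances satisfies the moment bound
`E[(Σᵢ kᵢ Yᵢ)^{2h}] ≤ C′ (maxᵢ kᵢ)^h` for convex kernel weights `kᵢ`. -/
theorem stmt_12 (h : ℕ) (hh : 1 ≤ h) (C β : ℝ) (hC : 0 < C)
    (hβ0 : 0 < β) (hβ1 : β < 1) :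
    ∃ C' : ℝ, 0 < C' ∧
      ∀ (Ω : Type) [MeasureSpace Ω], IsProbabilityMeasure (volume : Measure Ω) →
      ∀ (T : ℕ) (hT : 1 ≤ T),
      ∀ (Y : ℕ → Ω → ℝ),
      -- centering
      (∀ i : ℕ, 1 ≤ i → i ≤ T → ∫ ω, Y i ω = 0) →
      -- integrability of ordered products of length ≤ 2h
      (∀ v : ℕ, 1 ≤ v → v ≤ 2 * h → ∀ t : ℕ → ℕ,
        (∀ l, 1 ≤ l → l ≤ v → 1 ≤ t l ∧ t l ≤ T) →
        (∀ l l', 1 ≤ l → l ≤ l' → l' ≤ v → t l ≤ t l') →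
        Integrable (fun ω => ∏ l ∈ Finset.Icc 1 v, Y (t l) ω)) →
      -- geometric covariance bound for ordered split products
      (∀ j v : ℕ, 1 ≤ j → j < v → v ≤ 2 * h → ∀ t : ℕ → ℕ,
        (∀ l, 1 ≤ l → l ≤ v → 1 ≤ t l ∧ t l ≤ T) →
        (∀ l l', 1 ≤ l → l ≤ l' → l' ≤ v → t l ≤ t l') →
        |(∫ ω, (∏ l ∈ Finset.Icc 1 j, Y (t l) ω) *
              (∏ l ∈ Finset.Icc (j + 1) v, Y (t l) ω)) -
            (∫ ω, ∏ l ∈ Finset.Icc 1 j, Y (t l) ω) *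
              (∫ ω, ∏ l ∈ Finset.Icc (j + 1) v, Y (t l) ω)|
          ≤ C * β ^ (t (j + 1) - t j)) →
      ∀ k : ℕ → ℝ,
        (∀ i, 1 ≤ i → i ≤ T → 0 ≤ k i) →
        (∑ i ∈ Finset.Icc 1 T, k i) = 1 →
        (∫ ω, (∑ i ∈ Finset.Icc 1 T, k i * Y i ω) ^ (2 * h))
          ≤ C' * ((Finset.Icc 1 T).sup' (Finset.nonempty_Icc.mpr hT)
              (fun i => k i)) ^ h := by
  -- the uniform constants
  set γ : ℝ := β ^ (((2 * h - 1 : ℕ) : ℝ))⁻¹ with hγdef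
  have hn0 : 0 < 2 * h - 1 := by omega
  have hγ0 : 0 < γ := Real.rpow_pos_of_pos hβ0 _
  have hγ1 : γ < 1 := Real.rpow_lt_one hβ0.le hβ1 (by positivity)
  have hγβ : γ ^ (2 * h - 1) = β := by
    rw [hγdef, ← Real.rpow_natCast (β ^ (((2 * h - 1 : ℕ) : ℝ))⁻¹) (2 * h - 1),
      ← Real.rpow_mul hβ0.le, inv_mul_cancel₀ (by positivity), Real.rpow_one]
  set Q : ℝ := C * (1 - γ)⁻¹ ^ (2 * h) + 2 * h + 2 with hQdef
  have hCG0 : 0 ≤ C * (1 - γ)⁻¹ ^ (2 * h) := by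
    apply mul_nonneg hC.le
    apply pow_nonneg
    rw [inv_nonneg]
    linarith
  have hQCG : C * (1 - γ)⁻¹ ^ (2 * h) ≤ Q := by
    rw [hQdef]
    have : (0:ℝ) ≤ 2 * h := by positivity
    linarith
  have hQh : (2 * h : ℝ) ≤ Q := by rw [hQdef]; linarith
  have hQ2 : (2 : ℝ) ≤ Q := by
    rw [hQdef]
    have : (0:ℝ) ≤ 2 * h := by positivity
    linarith
  have hQ0 : (0:ℝ) < Q := by linarith
  refine ⟨(Nat.factorial (2 * h) : ℝ) * Q ^ (2 * h * (2 * h)), by positivity, ?_⟩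
  intro Ω _ hprob T hT Y hcent hint hcov k hk hksum
  set Mx : ℝ := (Finset.Icc 1 T).sup' (Finset.nonempty_Icc.mpr hT) (fun i => k i) with hMxdef
  have hk' : ∀ i ∈ Finset.Icc 1 T, 0 ≤ k i := by
    intro i hi
    rw [Finset.mem_Icc] at hi
    exact hk i hi.1 hi.2
  have hMx : ∀ i ∈ Finset.Icc 1 T, k i ≤ Mx := fun i hi => Finset.le_sup' _ hi
  have hMx0 : 0 ≤ Mx := by
    have h1 : (1:ℕ) ∈ Finset.Icc 1 T := by rw [Finset.mem_Icc]; omega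
    exact le_trans (hk' 1 h1) (hMx 1 h1)
  have hMx1 : Mx ≤ 1 := by
    apply Finset.sup'_le
    intro i hi
    rw [← hksum]
    exact Finset.single_le_sum (fun j hj => hk' j hj) hi
  -- expansion
  rw [final_expand Y T (2 * h) (by omega) (hint (2 * h) (by omega) le_rfl) k]
  have habs : ∑ g ∈ Fintype.piFinset (fun _ : Fin (2 * h) => Finset.Icc 1 T),
        wgt k (Finset.univ.val.map g) * itg Y (Finset.univ.val.map g)
      ≤ ∑ g ∈ Fintype.piFinset (fun _ : Fin (2 * h) => Finset.Icc 1 T),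
        (fun m => wgt k m * |itg Y m|) (Finset.univ.val.map g) := by
    apply Finset.sum_le_sum
    intro g hg
    simp only
    have hw : 0 ≤ wgt k (Finset.univ.val.map g) := by
      apply wgt_nonneg
      intro x hx
      rw [Multiset.mem_map] at hx
      obtain ⟨i, _, rfl⟩ := hx
      exact hk' _ ((Fintype.mem_piFinset.1 hg) i)
    exact mul_le_mul_of_nonneg_left (le_abs_self _) hw
  refine le_trans habs ?_
  refine le_trans (sum_tuples_le T (2 * h) (fun m => wgt k m * |itg Y m|)
    (fun m hm => mul_nonneg (wgt_nonneg_of_mem hk' hm) (abs_nonneg _))) ?_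
  have hkey := key_induction hprob Y T h hh hT C β γ Mx Q hC hγ0 hγ1 hγβ hcent hcov
    k hk' hksum hMx hMx0 hMx1 hQCG hQh hQ2 (2 * h) le_rfl
  have e2 : (2 * h + 1) / 2 = h := by omega
  rw [e2] at hkey
  calc (Nat.factorial (2 * h) : ℝ) * ∑ m ∈ msets T (2 * h), wgt k m * |itg Y m|
      ≤ (Nat.factorial (2 * h) : ℝ) * (Q ^ (2 * h * (2 * h)) * Mx ^ h) := by
        apply mul_le_mul_of_nonneg_left hkey (by positivity)
    _ = (Nat.factorial (2 * h) : ℝ) * Q ^ (2 * h * (2 * h)) * Mx ^ h := by ring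
end

section
/- Let δ > 0 and set κ = δ/(1+δ). Let M > 0 and let X, Y, Y′ be real random variables on a probability space such that E|X|^{1+δ} < ∞, |Y| ≤ M and |Y′| ≤ M almost surely, Y′ is independent of X, and E Y′ = E Y. Then |E(X·Y) − E(X)·E(Y)| ≤ (2M)^{1−κ} · (E|X|^{1+δ})^{1/(1+δ)} · (E|Y − Y′|)^{κ}. -/
open MeasureTheory ProbabilityTheory

/-- Coupling–Hölder covariance bound (engine of Lemma 3 of the supplement): if `Y′` is a
copy of `Y` (same mean), bounded by `M`, independent of `X`, and `E|X|^{1+δ} < ∞`, then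
`|Cov(X,Y)| ≤ (2M)^{1−κ} (E|X|^{1+δ})^{1/(1+δ)} (E|Y−Y′|)^κ` with `κ = δ/(1+δ)`. -/
theorem stmt_15 {Ω : Type*} [MeasureSpace Ω] [IsProbabilityMeasure (volume : Measure Ω)]
    (δ : ℝ) (hδ : 0 < δ) (κ : ℝ) (hκ : κ = δ / (1 + δ))
    (M : ℝ) (hM : 0 < M)
    (X Y Y' : Ω → ℝ)
    (hXmeas : Measurable X) (hYmeas : Measurable Y) (hY'meas : Measurable Y')
    (hXint : Integrable (fun ω => |X ω| ^ (1 + δ)))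
    (hYbd : ∀ᵐ ω ∂(volume : Measure Ω), |Y ω| ≤ M)
    (hY'bd : ∀ᵐ ω ∂(volume : Measure Ω), |Y' ω| ≤ M)
    (hindep : IndepFun Y' X)
    (hEY : ∫ ω, Y' ω = ∫ ω, Y ω) :
    |(∫ ω, X ω * Y ω) - (∫ ω, X ω) * (∫ ω, Y ω)| ≤
      (2 * M) ^ (1 - κ) * (∫ ω, |X ω| ^ (1 + δ)) ^ (1 / (1 + δ)) *
        (∫ ω, |Y ω - Y' ω|) ^ κ := by
  have hp : (0:ℝ) < 1 + δ := by linarith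
  have hκ0 : 0 < κ := by rw [hκ]; positivity
  have hκ1 : κ < 1 := by rw [hκ, div_lt_one hp]; linarith
  -- integrability of X
  have hXint1 : Integrable X := by
    refine Integrable.mono' (hXint.add (integrable_const 1)) hXmeas.aestronglyMeasurable ?_
    filter_upwards with ω
    simp only [Pi.add_apply, Real.norm_eq_abs]
    have h0 : (0:ℝ) ≤ |X ω| ^ (1 + δ) := Real.rpow_nonneg (abs_nonneg _) _
    rcases le_total (|X ω|) 1 with h | h
    · linarith
    · calc |X ω| = |X ω| ^ (1:ℝ) := (Real.rpow_one _).symm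
        _ ≤ |X ω| ^ (1 + δ) := Real.rpow_le_rpow_of_exponent_le h (by linarith)
        _ ≤ |X ω| ^ (1 + δ) + 1 := by linarith
  have hYint : Integrable Y :=
    Integrable.mono' (integrable_const M) hYmeas.aestronglyMeasurable
      (hYbd.mono fun ω h => by rwa [Real.norm_eq_abs])
  have hY'int : Integrable Y' :=
    Integrable.mono' (integrable_const M) hY'meas.aestronglyMeasurable
      (hY'bd.mono fun ω h => by rwa [Real.norm_eq_abs])
  have hXY : Integrable (fun ω => X ω * Y ω) := by
    refine Integrable.mono' (hXint1.abs.const_mul M)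
      (hXmeas.aestronglyMeasurable.mul hYmeas.aestronglyMeasurable) ?_
    filter_upwards [hYbd] with ω h
    rw [Real.norm_eq_abs, abs_mul]
    calc |X ω| * |Y ω| ≤ |X ω| * M := by
          exact mul_le_mul_of_nonneg_left h (abs_nonneg _)
      _ = M * |X ω| := mul_comm _ _
  have hXY' : Integrable (fun ω => X ω * Y' ω) := by
    refine Integrable.mono' (hXint1.abs.const_mul M)
      (hXmeas.aestronglyMeasurable.mul hY'meas.aestronglyMeasurable) ?_
    filter_upwards [hY'bd] with ω h
    rw [Real.norm_eq_abs, abs_mul]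
    calc |X ω| * |Y' ω| ≤ |X ω| * M := by
          exact mul_le_mul_of_nonneg_left h (abs_nonneg _)
      _ = M * |X ω| := mul_comm _ _
  -- rewrite the covariance via the coupling
  have hcov : (∫ ω, X ω * Y ω) - (∫ ω, X ω) * (∫ ω, Y ω)
      = ∫ ω, X ω * (Y ω - Y' ω) := by
    have h2 : (∫ ω, Y' ω * X ω) = (∫ ω, Y' ω) * ∫ ω, X ω :=
      hindep.integral_fun_mul_eq_mul_integral hY'int.1 hXint1.1
    have h3 : (∫ ω, X ω * (Y ω - Y' ω))
        = (∫ ω, X ω * Y ω) - ∫ ω, X ω * Y' ω := by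
      rw [← integral_sub hXY hXY']
      congr 1; ext ω; ring
    have h4 : (∫ ω, X ω * Y' ω) = ∫ ω, Y' ω * X ω := by
      congr 1; ext ω; ring
    rw [h3, h4, h2, hEY]; ring
  rw [hcov]
  -- pointwise bound and Hölder
  have h2M : ∀ᵐ ω ∂(volume : Measure Ω), |Y ω - Y' ω| ≤ 2 * M := by
    filter_upwards [hYbd, hY'bd] with ω h1 h2
    calc |Y ω - Y' ω| ≤ |Y ω| + |Y' ω| := abs_sub _ _
      _ ≤ 2 * M := by linarith
  have step1 : |∫ ω, X ω * (Y ω - Y' ω)| ≤ ∫ ω, |X ω| * |Y ω - Y' ω| := by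
    have := norm_integral_le_integral_norm (μ := (volume : Measure Ω))
      (f := fun ω => X ω * (Y ω - Y' ω))
    simpa [Real.norm_eq_abs, abs_mul] using this
  have hgbd : ∀ᵐ ω ∂(volume : Measure Ω), |Y ω - Y' ω| ^ κ ≤ (2*M) ^ κ := by
    filter_upwards [h2M] with ω h
    exact Real.rpow_le_rpow (abs_nonneg _) h hκ0.le
  have hgmeas : Measurable fun ω => |Y ω - Y' ω| ^ κ :=
    (Real.continuous_rpow_const hκ0.le).measurable.comp (hYmeas.sub hY'meas).abs
  have hRHSint : Integrable (fun ω => |X ω| * |Y ω - Y' ω| ^ κ) := by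
    refine Integrable.mono' (hXint1.abs.const_mul ((2*M) ^ κ))
      (hXmeas.abs.aestronglyMeasurable.mul hgmeas.aestronglyMeasurable) ?_
    filter_upwards [hgbd] with ω h
    rw [Real.norm_eq_abs, abs_mul, abs_abs,
      abs_of_nonneg (Real.rpow_nonneg (abs_nonneg _) _)]
    calc |X ω| * |Y ω - Y' ω| ^ κ ≤ |X ω| * (2*M) ^ κ :=
          mul_le_mul_of_nonneg_left h (abs_nonneg _)
      _ = (2*M) ^ κ * |X ω| := mul_comm _ _
  have step2 : (∫ ω, |X ω| * |Y ω - Y' ω|)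
      ≤ (2*M) ^ (1-κ) * ∫ ω, |X ω| * |Y ω - Y' ω| ^ κ := by
    rw [← integral_const_mul]
    refine integral_mono_ae ((hXY.sub hXY').abs.congr ?_) (hRHSint.const_mul _) ?_
    · filter_upwards with ω
      simp only [Pi.sub_apply]
      rw [← mul_sub, abs_mul]
    · filter_upwards [h2M] with ω h
      have key : |Y ω - Y' ω| ≤ (2*M) ^ (1-κ) * |Y ω - Y' ω| ^ κ := by
        have h1 : |Y ω - Y' ω| = |Y ω - Y' ω| ^ (1-κ) * |Y ω - Y' ω| ^ κ := by
          rw [← Real.rpow_add' (abs_nonneg _) (y := 1-κ) (z := κ)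
            (by rw [sub_add_cancel]; norm_num), sub_add_cancel, Real.rpow_one]
        calc |Y ω - Y' ω| = |Y ω - Y' ω| ^ (1-κ) * |Y ω - Y' ω| ^ κ := h1
          _ ≤ (2*M) ^ (1-κ) * |Y ω - Y' ω| ^ κ := by
              apply mul_le_mul_of_nonneg_right _ (Real.rpow_nonneg (abs_nonneg _) _)
              exact Real.rpow_le_rpow (abs_nonneg _) h (by linarith)
      calc |X ω| * |Y ω - Y' ω| ≤ |X ω| * ((2*M) ^ (1-κ) * |Y ω - Y' ω| ^ κ) :=
            mul_le_mul_of_nonneg_left key (abs_nonneg _)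
        _ = (2*M) ^ (1-κ) * (|X ω| * |Y ω - Y' ω| ^ κ) := by ring
  -- Hölder
  have hq : (0:ℝ) < (1+δ)/δ := by positivity
  have hpq : Real.HolderConjugate (1+δ) ((1+δ)/δ) := by
    rw [Real.holderConjugate_iff]
    constructor
    · linarith
    · field_simp
  have hfmem : MemLp (fun ω => |X ω|) (ENNReal.ofReal (1+δ)) := by
    have hne : ENNReal.ofReal (1+δ) ≠ 0 := by
      simp [ENNReal.ofReal_eq_zero]; linarith
    have hXmem : MemLp X (ENNReal.ofReal (1+δ)) := by
      rw [← memLp_norm_rpow_iff hXmeas.aestronglyMeasurable hne ENNReal.ofReal_ne_top]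
      rw [ENNReal.div_self hne ENNReal.ofReal_ne_top,
        ENNReal.toReal_ofReal hp.le, memLp_one_iff_integrable]
      simpa [Real.norm_eq_abs] using hXint
    have h := hXmem.norm
    simpa [Real.norm_eq_abs] using h
  have hgmem : MemLp (fun ω => |Y ω - Y' ω| ^ κ) (ENNReal.ofReal ((1+δ)/δ)) :=
    MemLp.of_bound hgmeas.aestronglyMeasurable ((2*M) ^ κ)
      (hgbd.mono fun ω h => by
        rwa [Real.norm_eq_abs, abs_of_nonneg (Real.rpow_nonneg (abs_nonneg _) _)])
  have hκq : κ * ((1+δ)/δ) = 1 := by rw [hκ]; field_simp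
  have holder := integral_mul_le_Lp_mul_Lq_of_nonneg hpq
    (f := fun ω => |X ω|) (g := fun ω => |Y ω - Y' ω| ^ κ)
    (Filter.Eventually.of_forall fun ω => abs_nonneg _)
    (Filter.Eventually.of_forall fun ω => Real.rpow_nonneg (abs_nonneg _) _)
    hfmem hgmem
  have hgq : (fun ω => (|Y ω - Y' ω| ^ κ) ^ ((1+δ)/δ)) = fun ω => |Y ω - Y' ω| := by
    ext ω
    rw [← Real.rpow_mul (abs_nonneg _), hκq, Real.rpow_one]
  have hinvq : 1 / ((1+δ)/δ) = κ := by rw [hκ]; field_simp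
  rw [hgq, hinvq] at holder
  have step3 : (∫ ω, |X ω| * |Y ω - Y' ω| ^ κ)
      ≤ (∫ ω, |X ω| ^ (1+δ)) ^ (1/(1+δ)) * (∫ ω, |Y ω - Y' ω|) ^ κ := by
    simpa using holder
  have h2Mpos : (0:ℝ) ≤ (2*M) ^ (1-κ) := Real.rpow_nonneg (by linarith) _
  calc |∫ ω, X ω * (Y ω - Y' ω)| ≤ ∫ ω, |X ω| * |Y ω - Y' ω| := step1
    _ ≤ (2*M) ^ (1-κ) * ∫ ω, |X ω| * |Y ω - Y' ω| ^ κ := step2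
    _ ≤ (2*M) ^ (1-κ) * ((∫ ω, |X ω| ^ (1+δ)) ^ (1/(1+δ)) * (∫ ω, |Y ω - Y' ω|) ^ κ) :=
        mul_le_mul_of_nonneg_left step3 h2Mpos
    _ = (2*M) ^ (1-κ) * (∫ ω, |X ω| ^ (1+δ)) ^ (1/(1+δ)) * (∫ ω, |Y ω - Y' ω|) ^ κ := by
        ring
end
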